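/- arXiv:1609.09291 — 11 statements merged into one kernel-verified Lean document; each statement's English description precedes it below -/
import Mathlib

section
/- Let p be a prime, n = 2k, and let L : F_{p^n} → F_{p^n} be defined by L(x) = a·x + b·x^{p^k} with a, b ∈ F_{p^n}^*. Let G be the (unique) subgroup of the multiplicative group F_{p^n}^* of order p^k + 1. Then L is a permutation of F_{p^n} if and only if a·b^{-1} does not lie in G. -/
/-!
Since `x ↦ x ^ p ^ k` is additive, `L` is additive, so it is a permutation iff its kernel is
trivial. With `q = p ^ k`, a nonzero `x` lies in the kernel iff `x ^ (q - 1) = -a b⁻¹`, so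
`L` fails to be a permutation iff `-a b⁻¹` is a `(q - 1)`-th power in the cyclic group
`F_{p^n}^*` of order `(q - 1)(q + 1)`. There the `(q - 1)`-th powers are exactly the solutions
of `y ^ (q + 1) = 1`, which form the unique subgroup `G` of order `q + 1`; finally
`-1 ∈ G` because `(-1) ^ q = -1` in characteristic `p`.
-/

open Function

lemma injective_mul_add_mul_pow_iff {R : Type*} [CommRing R] (p : ℕ) [ExpChar R p] (k : ℕ)
    (a b : R) :
    Injective (fun x : R => a * x + b * x ^ p ^ k) ↔ ∀ x, a * x + b * x ^ p ^ k = 0 → x = 0 :=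
  injective_iff_map_eq_zero
    (AddMonoidHom.mulLeft a + (AddMonoidHom.mulLeft b).comp (iterateFrobenius R p k))

lemma neg_one_pow_char_pow_add_one {R : Type*} [Ring R] (p : ℕ) [ExpChar R p] (k : ℕ) :
    (-1 : R) ^ (p ^ k + 1) = 1 := by
  rw [pow_succ, neg_one_pow_expChar_pow, neg_one_mul, neg_neg]

lemma mul_add_mul_pow_eq_zero_iff {K : Type*} [Field K] {a b x : K} (hb : b ≠ 0) (hx : x ≠ 0)
    {q : ℕ} (hq : q ≠ 0) : a * x + b * x ^ q = 0 ↔ x ^ (q - 1) = -(a * b⁻¹) := by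
  obtain ⟨r, rfl⟩ := Nat.exists_eq_succ_of_ne_zero hq
  rw [Nat.succ_sub_one, pow_succ, ← mul_assoc, ← add_mul, mul_eq_zero, or_iff_left hx,
    eq_neg_iff_add_eq_zero]
  field_simp
  ring_nf

lemma forall_mul_add_mul_pow_eq_zero_imp_iff {K : Type*} [Field K] {a b : K} (ha : a ≠ 0)
    (hb : b ≠ 0) {q : ℕ} (hq : q ≠ 0) :
    (∀ x : K, a * x + b * x ^ q = 0 → x = 0) ↔
      -Units.mk0 (a * b⁻¹) (mul_ne_zero ha (inv_ne_zero hb)) ∉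
        (powMonoidHom (q - 1) : Kˣ →* Kˣ).range := by
  simp only [MonoidHom.mem_range, powMonoidHom_apply, not_exists]
  constructor
  · intro h y hy
    refine y.ne_zero (h y ((mul_add_mul_pow_eq_zero_iff hb y.ne_zero hq).2 ?_))
    simpa using congrArg Units.val hy
  · intro h x hx
    by_contra hx0
    refine h (Units.mk0 x hx0) (Units.ext ?_)
    simpa using (mul_add_mul_pow_eq_zero_iff hb hx0 hq).1 hx

section Cyclic

variable {G : Type*} [CommGroup G] [IsCyclic G] [Finite G]

lemma IsCyclic.eq_ker_powMonoidHom_card (H : Subgroup G) :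
    H = (powMonoidHom (Nat.card H) : G →* G).ker := by
  refine Subgroup.eq_of_le_of_card_ge (fun x hx => ?_) ?_
  · exact congrArg Subtype.val (pow_card_eq_one' (G := H) (x := ⟨x, hx⟩))
  · rw [IsCyclic.card_powMonoidHom_ker, Nat.gcd_eq_right (Subgroup.card_subgroup_dvd_card H)]

lemma IsCyclic.range_powMonoidHom_eq_ker {m n : ℕ} (h : Nat.card G = m * n) :
    (powMonoidHom m : G →* G).range = (powMonoidHom n : G →* G).ker := by
  have hm : 0 < m := Nat.pos_of_mul_pos_right (h ▸ Nat.card_pos)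
  refine Subgroup.eq_of_le_of_card_ge ?_ ?_
  · rintro _ ⟨x, rfl⟩
    simp [← pow_mul, ← h, pow_card_eq_one']
  · rw [IsCyclic.card_powMonoidHom_ker, IsCyclic.card_powMonoidHom_range, h,
      Nat.gcd_eq_right (dvd_mul_left n m), Nat.gcd_eq_right (dvd_mul_right m n),
      Nat.mul_div_cancel_left n hm]

end Cyclic

theorem stmt_0_general {p k n : ℕ} (hp : p.Prime) (hn : n = 2 * k)
    {F : Type*} [Field F] [Fintype F] (hcard : Fintype.card F = p ^ n)
    (a b : F) (ha : a ≠ 0) (hb : b ≠ 0)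
    (G : Subgroup Fˣ) (hG : Nat.card G = p ^ k + 1) :
    Function.Bijective (fun x : F => a * x + b * x ^ p ^ k) ↔
      Units.mk0 (a * b⁻¹) (mul_ne_zero ha (inv_ne_zero hb)) ∉ G := by
  have : Fact p.Prime := ⟨hp⟩
  have : CharP F p := charP_of_card_eq_prime_pow hcard
  have hcardU : Nat.card Fˣ = (p ^ k - 1) * (p ^ k + 1) := by
    rw [Nat.card_units, Nat.card_eq_fintype_card, hcard, hn, mul_comm, pow_mul, mul_comm,
      ← Nat.sq_sub_sq, one_pow]
  have hneg : ∀ u : Fˣ, (-u) ^ (p ^ k + 1) = u ^ (p ^ k + 1) := fun u => by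
    rw [neg_pow, (Units.ext (by simpa using neg_one_pow_char_pow_add_one (R := F) p k) :
      (-1 : Fˣ) ^ (p ^ k + 1) = 1), one_mul]
  rw [← Finite.injective_iff_bijective, injective_mul_add_mul_pow_iff,
    forall_mul_add_mul_pow_eq_zero_imp_iff ha hb (pow_ne_zero k hp.ne_zero),
    IsCyclic.range_powMonoidHom_eq_ker hcardU, IsCyclic.eq_ker_powMonoidHom_card G, hG]
  simp only [MonoidHom.mem_ker, powMonoidHom_apply, hneg]

/-- **Lemma 2.2 (i).** Let `p` be a prime, `n = 2k`, and `L : F_{p^n} → F_{p^n}` be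
`L(x) = a·x + b·x^{p^k}` with `a, b ∈ F_{p^n}^*`.  Let `G` be the (unique) subgroup of
`F_{p^n}^*` of order `p^k + 1`.  Then `L` is a permutation of `F_{p^n}` iff
`a·b⁻¹ ∉ G`. -/
theorem stmt_0 {p k n : ℕ} (hp : p.Prime) (hk : 0 < k) (hn : n = 2 * k)
    {F : Type*} [Field F] [Fintype F] (hcard : Fintype.card F = p ^ n)
    (a b : F) (ha : a ≠ 0) (hb : b ≠ 0)
    (G : Subgroup Fˣ) (hG : Nat.card G = p ^ k + 1) :
    Function.Bijective (fun x : F => a * x + b * x ^ p ^ k) ↔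
      Units.mk0 (a * b⁻¹) (mul_ne_zero ha (inv_ne_zero hb)) ∉ G :=
  stmt_0_general hp hn hcard a b ha hb G hG
end

section
/- Let p be a prime, n = 2k, and let L : F_{p^n} → F_{p^n} be defined by L(x) = a·x + b·x^{p^k} with a, b ∈ F_{p^n}^*. Then L is an involution (i.e., L(L(x)) = x for all x ∈ F_{p^n}) if and only if T^n_k(a) = 0 and b^{p^k+1} = 1 − a^2, where T^n_k denotes the trace map from F_{p^n} to F_{p^k}, T^n_k(β) = β + β^{p^k}. -/
/-- **Lemma 2.2 (ii).** Let `p` be a prime, `n = 2k`, and `L : F_{p^n} → F_{p^n}` be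
`L(x) = a·x + b·x^{p^k}` with `a, b ∈ F_{p^n}^*`.  Then `L` is an involution iff
`T^n_k(a) = a + a^{p^k} = 0` and `b^{p^k+1} = 1 - a^2`. -/
theorem stmt_1 {p k n : ℕ} (hp : p.Prime) (hk : 0 < k) (hn : n = 2 * k)
    {F : Type*} [Field F] [Fintype F] (hcard : Fintype.card F = p ^ n)
    (a b : F) (ha : a ≠ 0) (hb : b ≠ 0) :
    (∀ x : F,
        a * (a * x + b * x ^ p ^ k) + b * (a * x + b * x ^ p ^ k) ^ p ^ k = x) ↔
      (a + a ^ p ^ k = 0 ∧ b ^ (p ^ k + 1) = 1 - a ^ 2) := by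
  -- char F = p
  haveI : CharP F p := by
    obtain ⟨m, hprime, hm⟩ := FiniteField.card F (ringChar F)
    have hr : ringChar F ∣ p := by
      have : ringChar F ∣ p ^ n := by
        rw [← hcard, hm]; exact dvd_pow_self _ (by exact_mod_cast m.ne_zero)
      exact hprime.dvd_of_dvd_pow this
    have : ringChar F = p := ((Nat.prime_dvd_prime_iff_eq hprime hp).mp hr)
    exact this ▸ ringChar.charP F
  haveI : Fact p.Prime := ⟨hp⟩
  set q := p ^ k with hq
  have hq1 : 1 < q := Nat.one_lt_pow hk.ne' hp.one_lt
  have hfrob : ∀ x y : F, (x + y) ^ q = x ^ q + y ^ q := fun x y => add_pow_char_pow x y p k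
  have hqq : ∀ x : F, (x ^ q) ^ q = x := by
    intro x
    rw [← pow_mul, hq, ← pow_add, ← two_mul, ← hn, ← hcard]
    exact FiniteField.pow_card x
  -- key expansion
  have hexp : ∀ x : F,
      a * (a * x + b * x ^ q) + b * (a * x + b * x ^ q) ^ q
        = (a ^ 2 + b * b ^ q) * x + (a * b + b * a ^ q) * x ^ q := by
    intro x
    rw [hfrob, mul_pow, mul_pow, hqq]
    ring
  constructor
  · intro h
    -- c * x + d * x^q = 0 for all x, with c = a^2 + b*b^q - 1, d = a*b + b*a^q
    have h0 : ∀ x : F, (a ^ 2 + b * b ^ q - 1) * x + (a * b + b * a ^ q) * x ^ q = 0 := by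
      intro x
      have := h x
      rw [hexp] at this
      linear_combination this
    -- there exists x with x^q ≠ x
    obtain ⟨y, hy⟩ : ∃ y : F, y ^ q ≠ y := by
      by_contra hall
      push_neg at hall
      have hdeg : (Polynomial.X ^ q - Polynomial.X : Polynomial F).natDegree = q := by
        rw [Polynomial.natDegree_sub_eq_left_of_natDegree_lt, Polynomial.natDegree_X_pow]
        rw [Polynomial.natDegree_X, Polynomial.natDegree_X_pow]; omega
      have hne : (Polynomial.X ^ q - Polynomial.X : Polynomial F) ≠ 0 := by
        intro hzero
        rw [hzero, Polynomial.natDegree_zero] at hdeg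
        omega
      have hsub : (Finset.univ : Finset F).val ⊆
          (Polynomial.X ^ q - Polynomial.X : Polynomial F).roots := by
        intro x hx
        rw [Polynomial.mem_roots hne]
        simp [Polynomial.IsRoot, hall x]
      have hle := Polynomial.card_le_degree_of_subset_roots hsub
      rw [Finset.card_univ, hcard, hdeg, hn] at hle
      have : p ^ k ≤ p ^ (2 * k) := Nat.pow_le_pow_right hp.pos (by omega)
      have hlt : p ^ k < p ^ (2 * k) := Nat.pow_lt_pow_right hp.one_lt (by omega)
      omega
    have h1 := h0 1
    simp at h1
    have h2 := h0 y
    have hc : a ^ 2 + b * b ^ q - 1 = 0 := by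
      have hd : (a * b + b * a ^ q) = -(a ^ 2 + b * b ^ q - 1) := by linear_combination h1
      rw [hd] at h2
      have : (a ^ 2 + b * b ^ q - 1) * (y - y ^ q) = 0 := by linear_combination h2
      rcases mul_eq_zero.mp this with h | h
      · exact h
      · exact absurd (by linear_combination -h) hy
    have hd : a * b + b * a ^ q = 0 := by linear_combination h1 - hc
    constructor
    · have : b * (a + a ^ q) = 0 := by linear_combination hd
      rcases mul_eq_zero.mp this with h | h
      · exact absurd h hb
      · exact h
    · rw [pow_add, pow_one]
      linear_combination hc
  · rintro ⟨h1, h2⟩ x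
    rw [hexp]
    have haq : a ^ q = -a := by linear_combination h1
    have hbq : b * b ^ q = 1 - a ^ 2 := by
      rw [← h2, pow_add, pow_one]; ring
    rw [haq, hbq]
    ring
end

section
/- Let p be a prime and n = rk with r, k > 1. Let L be an F_{p^k}-linear permutation of F_{p^n}, let f : F_{p^n} → F_{p^k}, h : F_{p^k} → F_{p^k}, γ ∈ F_{p^n}^*, and b ∈ F_{p^k}, and assume γ is a b-linear translator of f. Then F(x) = L(x) + L(γ)·h(f(x)) permutes F_{p^n} if and only if the map g : u ↦ u + b·h(u) permutes F_{p^k}. -/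
/-!
Since `L` is additive and `F_{p^k}`-linear and `h (f x) ∈ F_{p^k}`, the map factors as
`x ↦ L (x + h (f x) * γ)`, so it permutes `F_{p^n}` iff `G x = x + h (f x) * γ` does.
The translator property gives `f ∘ G = g ∘ f`. If `g` is injective on `F_{p^k}`, then
`G x = G y` forces `f x = f y` and hence `x = y`. Conversely, if `b ≠ 0` then `f` maps onto
`F_{p^k}` (because `f (u * γ) = f 0 + u b`), so a surjective `G` makes `g` surjective, hence
bijective, on the finite set `F_{p^k}`; if `b = 0` then `g` is the identity.
-/

/-- `γ` is a `b`-linear translator of `f : F_{p^n} → F_{p^k}` (the subfield `F_{p^k}`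
is realized as `{u : F | u ^ p ^ k = u}`). -/
def IsLinearTranslator (p k : ℕ) {F : Type*} [Field F] (f : F → F) (γ b : F) : Prop :=
  ∀ x u : F, u ^ p ^ k = u → f (x + u * γ) - f x = u * b

open Function

section FixedSubfield

variable (F : Type*) [Field F] (p k : ℕ) [ExpChar F p]

def frobeniusFixedSubfield : Subfield F :=
  RingHom.eqLocusField (iterateFrobenius F p k) (RingHom.id F)

variable {F p k}

theorem pow_pow_mul_of_mem_frobeniusFixedSubfield {u : F} (hu : u ∈ frobeniusFixedSubfield F p k)
    (i : ℕ) : u ^ p ^ (k * i) = u :=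
  (iterateFrobenius_mul_apply F p k i u).trans (IsFixedPt.iterate hu i)

variable {r : ℕ} (lam : Fin r → F)

theorem sum_mul_pow_pow_add (x y : F) :
    ∑ i : Fin r, lam i * (x + y) ^ p ^ (k * (i : ℕ)) =
      ∑ i : Fin r, lam i * x ^ p ^ (k * (i : ℕ)) +
        ∑ i : Fin r, lam i * y ^ p ^ (k * (i : ℕ)) := by
  simp only [add_pow_expChar_pow, mul_add, Finset.sum_add_distrib]

theorem sum_mul_pow_pow_mul_of_mem {u : F} (hu : u ∈ frobeniusFixedSubfield F p k) (x : F) :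
    ∑ i : Fin r, lam i * (u * x) ^ p ^ (k * (i : ℕ)) =
      u * ∑ i : Fin r, lam i * x ^ p ^ (k * (i : ℕ)) := by
  simp only [mul_pow, pow_pow_mul_of_mem_frobeniusFixedSubfield hu, Finset.mul_sum]
  exact Finset.sum_congr rfl fun i _ => mul_left_comm _ _ _

end FixedSubfield

section Translator

variable {F : Type*} [Field F] {K : Subfield F} {f h : F → F} {γ b : F}

theorem bijective_add_mul_iff_of_semilinear {L c : F → F} (hL : Bijective L)
    (hadd : ∀ x y, L (x + y) = L x + L y) (hsmul : ∀ u ∈ K, ∀ x, L (u * x) = u * L x)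
    (hc : ∀ x, c x ∈ K) :
    Bijective (fun x => L x + L γ * c x) ↔ Bijective (fun x => x + c x * γ) := by
  have hcomp : (fun x => L x + L γ * c x) = L ∘ fun x => x + c x * γ := by
    funext x
    rw [comp_apply, hadd, hsmul _ (hc x), mul_comm]
  rw [hcomp, hL.of_comp_iff']

theorem apply_add_mul_of_translator (htr : ∀ x, ∀ u ∈ K, f (x + u * γ) - f x = u * b)
    (hf : ∀ x, f x ∈ K) (hh : ∀ u ∈ K, h u ∈ K) (x : F) :
    f (x + h (f x) * γ) = f x + b * h (f x) := by
  linear_combination htr x _ (hh _ (hf x))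

theorem surjOn_of_translator (htr : ∀ x, ∀ u ∈ K, f (x + u * γ) - f x = u * b)
    (hb : b ∈ K) (hb0 : b ≠ 0) (hf0 : f 0 ∈ K) : Set.SurjOn f Set.univ K := by
  intro s hs
  refine ⟨(s - f 0) * b⁻¹ * γ, Set.mem_univ _, ?_⟩
  have := htr 0 ((s - f 0) * b⁻¹) (K.mul_mem (K.sub_mem hs hf0) (K.inv_mem hb))
  rw [zero_add, inv_mul_cancel_right₀ hb0] at this
  linear_combination this

theorem mapsTo_add_mul (hb : b ∈ K) (hh : ∀ u ∈ K, h u ∈ K) :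
    Set.MapsTo (fun u => u + b * h u) K K :=
  fun u hu => K.add_mem hu (K.mul_mem hb (hh u hu))

theorem bijOn_of_bijective_add_mul [Finite F]
    (htr : ∀ x, ∀ u ∈ K, f (x + u * γ) - f x = u * b)
    (hf : ∀ x, f x ∈ K) (hh : ∀ u ∈ K, h u ∈ K) (hb : b ∈ K)
    (hG : Bijective fun x => x + h (f x) * γ) : Set.BijOn (fun u => u + b * h u) K K := by
  rcases eq_or_ne b 0 with rfl | hb0
  · simp only [zero_mul, add_zero]
    exact Set.bijOn_id _
  refine ((Set.toFinite _).surjOn_iff_bijOn_of_mapsTo (mapsTo_add_mul hb hh)).mp fun s hs => ?_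
  obtain ⟨y, -, rfl⟩ := surjOn_of_translator htr hb hb0 (hf 0) hs
  obtain ⟨x, rfl⟩ := hG.surjective y
  exact ⟨f x, hf x, (apply_add_mul_of_translator htr hf hh x).symm⟩

theorem injective_add_mul_of_injOn (htr : ∀ x, ∀ u ∈ K, f (x + u * γ) - f x = u * b)
    (hf : ∀ x, f x ∈ K) (hh : ∀ u ∈ K, h u ∈ K)
    (hg : Set.InjOn (fun u => u + b * h u) K) : Injective fun x => x + h (f x) * γ := by
  intro x y hxy
  have hfxy : f x = f y := hg (hf x) (hf y) <| by
    simpa only [apply_add_mul_of_translator htr hf hh] using congrArg f hxy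
  simpa only [hfxy, add_left_inj] using hxy

theorem bijective_add_mul_iff_bijOn [Finite F]
    (htr : ∀ x, ∀ u ∈ K, f (x + u * γ) - f x = u * b)
    (hf : ∀ x, f x ∈ K) (hh : ∀ u ∈ K, h u ∈ K) (hb : b ∈ K) :
    Bijective (fun x => x + h (f x) * γ) ↔ Set.BijOn (fun u => u + b * h u) K K :=
  ⟨bijOn_of_bijective_add_mul htr hf hh hb,
    fun hg => (injective_add_mul_of_injOn htr hf hh hg.injOn).bijective_of_finite⟩

end Translator

theorem stmt_2_general {p k r n : ℕ} (hp : p.Prime)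
    {F : Type*} [Field F] [Fintype F] (hcard : Fintype.card F = p ^ n)
    (L : F → F) (lam : Fin r → F)
    (hL : ∀ x, L x = ∑ i : Fin r, lam i * x ^ p ^ (k * (i : ℕ)))
    (hLbij : Function.Bijective L)
    (f h : F → F) (hf : ∀ x, f x ^ p ^ k = f x)
    (hh : ∀ u : F, u ^ p ^ k = u → h u ^ p ^ k = h u)
    (γ : F) (b : F) (hb : b ^ p ^ k = b)
    (htr : IsLinearTranslator p k f γ b) :
    Function.Bijective (fun x : F => L x + L γ * h (f x)) ↔
      Set.BijOn (fun u : F => u + b * h u)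
        {u : F | u ^ p ^ k = u} {u : F | u ^ p ^ k = u} := by
  have : Fact p.Prime := ⟨hp⟩
  have : CharP F p := charP_of_card_eq_prime_pow hcard
  have hLadd : ∀ x y, L (x + y) = L x + L y := fun x y => by
    simp only [hL, sum_mul_pow_pow_add]
  have hLsmul : ∀ u ∈ frobeniusFixedSubfield F p k, ∀ x, L (u * x) = u * L x :=
    fun u hu x => by
      simp only [hL, sum_mul_pow_pow_mul_of_mem lam hu]
  rw [bijective_add_mul_iff_of_semilinear hLbij hLadd hLsmul fun x => hh _ (hf x)]
  exact bijective_add_mul_iff_bijOn (K := frobeniusFixedSubfield F p k) (fun x u hu => htr x u hu)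
    hf hh hb

/-- **Theorem 2.4 (Kyureghyan).** Let `n = rk` with `r, k > 1`, `L` an `F_{p^k}`-linear
permutation of `F_{p^n}`, `f : F_{p^n} → F_{p^k}`, `h : F_{p^k} → F_{p^k}`,
`γ ∈ F_{p^n}^*` a `b`-linear translator of `f`.  Then `F(x) = L(x) + L(γ)·h(f(x))`
permutes `F_{p^n}` iff `g : u ↦ u + b·h(u)` permutes `F_{p^k}`. -/
theorem stmt_2 {p k r n : ℕ} (hp : p.Prime) (hk : 1 < k) (hr : 1 < r) (hn : n = r * k)
    {F : Type*} [Field F] [Fintype F] (hcard : Fintype.card F = p ^ n)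
    (L : F → F) (lam : Fin r → F)
    (hL : ∀ x, L x = ∑ i : Fin r, lam i * x ^ p ^ (k * (i : ℕ)))
    (hLbij : Function.Bijective L)
    (f h : F → F) (hf : ∀ x, f x ^ p ^ k = f x)
    (hh : ∀ u : F, u ^ p ^ k = u → h u ^ p ^ k = h u)
    (γ : F) (hγ : γ ≠ 0) (b : F) (hb : b ^ p ^ k = b)
    (htr : IsLinearTranslator p k f γ b) :
    Function.Bijective (fun x : F => L x + L γ * h (f x)) ↔
      Set.BijOn (fun u : F => u + b * h u)
        {u : F | u ^ p ^ k = u} {u : F | u ^ p ^ k = u} :=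
  stmt_2_general hp hcard L lam hL hLbij f h hf hh γ b hb htr
end

section
/- Let p be a prime, n = rk with r > 1, and let f(x) = x^d be a monomial map from F_{p^n} to F_{p^n}. Then: (i) the image of f is contained in the subfield F_{p^k} if and only if d = j·(p^{k(r−1)} + p^{k(r−2)} + ⋯ + p^k + 1) for some j ∈ {1, …, p^k − 1}; (ii) viewed as a function f : F_{p^n} → F_{p^k} (when its image lies in F_{p^k}), f does not admit any b-linear translator for any γ ∈ F_{p^n}^* and b ∈ F_{p^k}. -/
open Polynomial

lemma aux_geom (p k r : ℕ) (hp : 0 < p) :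
    (p ^ k - 1) * ∑ i ∈ Finset.range r, p ^ (k * i) = p ^ (r * k) - 1 := by
  have h1 : 1 ≤ p ^ k := Nat.one_le_pow _ _ hp
  have h2 : 1 ≤ p ^ (r * k) := Nat.one_le_pow _ _ hp
  zify [h1, h2]
  have : ∀ i, ((p:ℤ)) ^ (k * i) = ((p:ℤ)^k) ^ i := fun i => by rw [← pow_mul]
  simp_rw [this]
  rw [mul_comm, geom_sum_mul, mul_comm r k, pow_mul]

/-- **Proposition 3.2.** Let `n = rk` with `r > 1` and `f(x) = x^d` on `F_{p^n}`.
(i) The image of `f` lies in the subfield `F_{p^k}` iff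
`d = j·(p^{k(r-1)} + ⋯ + p^k + 1)` for some `j ∈ {1, …, p^k − 1}`.
(ii) When its image lies in `F_{p^k}`, the function `f` admits no `b`-linear
translator for any `γ ∈ F_{p^n}^*` and `b ∈ F_{p^k}`. -/
theorem stmt_3 {p k r n d : ℕ} (hp : p.Prime) (hk : 0 < k) (hr : 1 < r) (hn : n = r * k)
    (hd1 : 1 ≤ d) (hd2 : d ≤ p ^ n - 1)
    {F : Type*} [Field F] [Fintype F] (hcard : Fintype.card F = p ^ n) :
    ((∀ x : F, (x ^ d) ^ p ^ k = x ^ d) ↔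
      ∃ j, 1 ≤ j ∧ j ≤ p ^ k - 1 ∧ d = j * ∑ i ∈ Finset.range r, p ^ (k * i)) ∧
    ((∀ x : F, (x ^ d) ^ p ^ k = x ^ d) →
      ¬ ∃ (γ b : F), γ ≠ 0 ∧ b ^ p ^ k = b ∧
        IsLinearTranslator p k (fun x : F => x ^ d) γ b) := by
  have hp0 : 0 < p := hp.pos
  set s : ℕ := ∑ i ∈ Finset.range r, p ^ (k * i) with hs_def
  have hpk1 : 1 < p ^ k := Nat.one_lt_pow hk.ne' hp.one_lt
  have hgeom : (p ^ k - 1) * s = p ^ n - 1 := by rw [hn]; exact aux_geom p k r hp0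
  have hn0 : 0 < n := by rw [hn]; positivity
  -- s ≥ 2
  have hs2 : 2 ≤ s := by
    have h := Finset.single_le_sum (f := fun i => p ^ (k * i))
      (fun i _ => Nat.zero_le _) (Finset.mem_range.mpr hr)
    simp only [mul_one] at h
    omega
  -- p does not divide s
  have hpns : ¬ p ∣ s := by
    intro hdvd
    have hrw : s = (∑ i ∈ Finset.range (r - 1), p ^ (k * (i + 1))) + 1 := by
      rw [hs_def]
      have hr' : r = (r - 1) + 1 := by omega
      rw [hr', Finset.sum_range_succ']
      simp
    have hsum : p ∣ ∑ i ∈ Finset.range (r - 1), p ^ (k * (i + 1)) := by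
      apply Finset.dvd_sum
      intro i _
      exact dvd_pow_self p (by positivity)
    rw [hrw] at hdvd
    have h1 : p ∣ 1 := (Nat.dvd_add_right hsum).mp hdvd
    exact absurd (Nat.dvd_one.mp h1) hp.one_lt.ne'
  -- forward direction core: hypothesis implies s ∣ d
  have forward : (∀ x : F, (x ^ d) ^ p ^ k = x ^ d) → s ∣ d := by
    intro H
    have key : ∀ x : Fˣ, x ^ (d * (p ^ k - 1)) = 1 := by
      intro x
      have hx : ((x : F) ^ d) ^ p ^ k = (x : F) ^ d := H x
      rw [← pow_mul] at hx
      have hxd : (x : F) ^ d ≠ 0 := pow_ne_zero _ x.ne_zero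
      have heq : d * (p ^ k - 1) + d = d * p ^ k := by
        have h1 : p ^ k - 1 + 1 = p ^ k := by omega
        calc d * (p ^ k - 1) + d = d * (p ^ k - 1 + 1) := by ring
          _ = d * p ^ k := by rw [h1]
      have hx2 : (x : F) ^ (d * (p ^ k - 1)) * (x : F) ^ d = (x : F) ^ d := by
        rw [← pow_add, heq, hx]
      have hx3 : (x : F) ^ (d * (p ^ k - 1)) = 1 :=
        mul_right_cancel₀ hxd (by rw [one_mul]; exact hx2)
      ext
      push_cast
      exact hx3
    have hdvd : p ^ n - 1 ∣ d * (p ^ k - 1) := by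
      have := (FiniteField.forall_pow_eq_one_iff (K := F) (d * (p ^ k - 1))).mp key
      rwa [hcard] at this
    rw [← hgeom] at hdvd
    have h2 : s * (p ^ k - 1) ∣ d * (p ^ k - 1) := by rwa [mul_comm (p ^ k - 1) s] at hdvd
    exact (Nat.mul_dvd_mul_iff_right (Nat.sub_pos_of_lt hpk1)).mp h2
  constructor
  · constructor
    · intro H
      have hsd : s ∣ d := forward H
      refine ⟨d / s, ?_, ?_, (Nat.div_mul_cancel hsd).symm⟩
      · rw [Nat.one_le_div_iff (by omega)]
        exact Nat.le_of_dvd hd1 hsd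
      · have hds : d / s * s = d := Nat.div_mul_cancel hsd
        have hle : d / s * s ≤ (p ^ k - 1) * s := by rw [hds, hgeom]; exact hd2
        exact Nat.le_of_mul_le_mul_right hle (by omega)
    · rintro ⟨j, hj1, hj2, rfl⟩ x
      rcases eq_or_ne x 0 with rfl | hx
      · rw [zero_pow (by positivity), zero_pow (by positivity)]
      · rw [← pow_mul]
        have h1 : p ^ k - 1 + 1 = p ^ k := by omega
        have heq : j * s * p ^ k = j * s + j * (p ^ n - 1) := by
          rw [← hgeom]
          calc j * s * p ^ k = j * s * (p ^ k - 1 + 1) := by rw [h1]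
            _ = j * s + j * ((p ^ k - 1) * s) := by ring
        rw [heq, pow_add]
        have hone : x ^ (j * (p ^ n - 1)) = 1 := by
          rw [← hcard, mul_comm, pow_mul,
            FiniteField.pow_card_sub_one_eq_one x hx, one_pow]
        rw [hone, mul_one]
  · rintro H ⟨γ, b, hγ, hb, htr⟩
    have hsd : s ∣ d := forward H
    have hd0 : d ≠ 0 := by omega
    -- CharP F p
    haveI hFchar : CharP F (ringChar F) := ringChar.charP F
    have hrc : ringChar F = p := by
      obtain ⟨m, hrp, hFcard⟩ := FiniteField.card F (ringChar F)
      have hdvd : p ∣ ringChar F ^ (m : ℕ) := by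
        rw [← hFcard, hcard]; exact dvd_pow_self p hn0.ne'
      exact ((Nat.prime_dvd_prime_iff_eq hp hrp).mp (hp.dvd_of_dvd_pow hdvd)).symm
    haveI hchar : CharP F p := hrc ▸ hFchar
    haveI := Fact.mk hp
    -- difference identity
    have hdev : ∀ x : F, (x + γ) ^ d = x ^ d + b := by
      intro x
      have h := htr x 1 (one_pow _)
      simp only [one_mul] at h
      linear_combination h
    -- polynomial identity
    set P : F[X] := (X + C γ) ^ d - (X ^ d + C b) with hP_def
    have hPeval : ∀ x : F, P.eval x = 0 := by
      intro x
      simp only [hP_def, eval_sub, eval_add, eval_pow, eval_X, eval_C, hdev x]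
      ring
    have hPz : P = 0 := by
      by_cases h0 : P = 0
      · exact h0
      apply Polynomial.eq_zero_of_natDegree_lt_card_of_eval_eq_zero P
        Function.injective_id (fun i => hPeval i)
      rw [hcard]
      have hA : ((X + C γ) ^ d : F[X]).Monic := (monic_X_add_C γ).pow d
      have hdegA : ((X + C γ) ^ d : F[X]).degree = (d : ℕ) := by
        rw [Polynomial.degree_pow, Polynomial.degree_X_add_C]
        simp
      have hdegB : ((X ^ d + C b) : F[X]).degree = (d : ℕ) :=
        Polynomial.degree_X_pow_add_C (by omega : 0 < d) b
      have hlcB : ((X ^ d + C b) : F[X]).leadingCoeff = 1 :=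
        Polynomial.leadingCoeff_X_pow_add_C (by omega : 0 < d)
      have hdeg : P.degree < (d : ℕ) := by
        rw [hP_def]
        calc P.degree < ((X + C γ) ^ d : F[X]).degree :=
              Polynomial.degree_sub_lt (by rw [hdegA, hdegB]) hA.ne_zero
                (by rw [hA.leadingCoeff, hlcB])
          _ = (d : ℕ) := hdegA
      have hnd : P.natDegree < d := (Polynomial.natDegree_lt_iff_degree_lt h0).mpr hdeg
      have hdn : d < p ^ n := by
        have : 1 ≤ p ^ n := Nat.one_le_pow _ _ hp0
        omega
      omega
    have hid : ((X + C γ) ^ d : F[X]) = X ^ d + C b := sub_eq_zero.mp hPz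
    -- extract p-part of d
    set e : ℕ := d.factorization p with he_def
    set D : ℕ := d / p ^ e with hD_def
    have hde : p ^ e * D = d := Nat.ordProj_mul_ordCompl_eq_self d p
    have hpD : ¬ p ∣ D := Nat.not_dvd_ordCompl hp hd0
    have hD0 : 0 < D := Nat.ordCompl_pos p hd0
    have hsD : s ∣ D := by
      have hcop : Nat.Coprime s (p ^ e) :=
        ((Nat.Prime.coprime_iff_not_dvd hp).mpr hpns).symm.pow_right e
      exact hcop.dvd_of_dvd_mul_left (hde ▸ hsd)
    have hD2 : 2 ≤ D := le_trans hs2 (Nat.le_of_dvd hD0 hsD)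
    -- Frobenius
    set c : F := γ ^ p ^ e with hc_def
    have hc0 : c ≠ 0 := pow_ne_zero _ hγ
    have hfr : ((X + C γ) : F[X]) ^ p ^ e = X ^ p ^ e + C c := by
      rw [add_pow_char_pow, hc_def, map_pow]
    have hid2 : ((X ^ p ^ e + C c : F[X])) ^ D = X ^ d + C b := by
      rw [← hfr, ← pow_mul, hde, hid]
    have he1 : Polynomial.expand F (p ^ e) ((X + C c) ^ D) = (X ^ p ^ e + C c) ^ D := by
      rw [map_pow, map_add, Polynomial.expand_X, Polynomial.expand_C]
    have he2 : Polynomial.expand F (p ^ e) (X ^ D + C b) = (X ^ d + C b : F[X]) := by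
      rw [map_add, map_pow, Polynomial.expand_X, Polynomial.expand_C, ← pow_mul, hde]
    have hQ : ((X + C c) ^ D : F[X]) = X ^ D + C b := by
      apply Polynomial.expand_injective (n := p ^ e) (by positivity)
      rw [he1, he2, hid2]
    -- compare coefficient at 1
    have hcoeff := congrArg (fun q : F[X] => q.coeff 1) hQ
    simp only [Polynomial.coeff_X_add_C_pow, Polynomial.coeff_add,
      Polynomial.coeff_X_pow, Polynomial.coeff_C] at hcoeff
    rw [if_neg (by omega : ¬ (1 : ℕ) = D), if_neg (by norm_num)] at hcoeff
    rw [Nat.choose_one_right] at hcoeff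
    have hDne : (D : F) ≠ 0 := by
      rw [Ne, CharP.cast_eq_zero_iff F p D]
      exact hpD
    have hcne : c ^ (D - 1) ≠ 0 := pow_ne_zero _ hc0
    rw [add_zero] at hcoeff
    exact (mul_ne_zero hcne hDne) hcoeff
end

section
/- Let p be a prime, n = rk with r > 1, β ∈ F_{p^n}^*, γ ∈ F_{p^n}^*, and let f(x) = T^n_k(β·x^{p^i + p^j}) with i < j and j = i + kl for some 0 < l < r. Then f(x + uγ) − f(x) = T^n_k(β·(uγ)^{p^i + p^j}) holds for all x ∈ F_{p^n} and all u ∈ F_{p^k} if and only if β·γ^{p^{i+lk}} + β^{p^{(r−l)k}}·γ^{p^{i+(r−l)k}} = 0. In particular, when β ∈ F_{p^k}^*, this holds if and only if γ^{p^{2kl} − 1} = −1, which for p > 2 requires that r/gcd(r, 2l) be even. -/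
/-- The relative trace map from `F_{p^n}` to the subfield `F_{p^k}`, where `n = r·k`:
`T^n_k(x) = x + x^{p^k} + ⋯ + x^{p^{(r-1)k}}`. -/
def traceMap (p k r : ℕ) {F : Type*} [Field F] (x : F) : F :=
  ∑ t ∈ Finset.range r, x ^ p ^ (k * t)

/-- The derivative of `f(x) = T^n_k(β·x^{p^i+p^j})` in direction `uγ` (for `u` in the
subfield `F_{p^k}`) is independent of `x`:
`f(x + uγ) − f(x) = T^n_k(β·(uγ)^{p^i+p^j})` for all `x ∈ F_{p^n}`, `u ∈ F_{p^k}`. -/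
def HasConstantDerivative (p k r i j : ℕ) {F : Type*} [Field F] (β γ : F) : Prop :=
  ∀ x u : F, u ^ p ^ k = u →
    traceMap p k r (β * (x + u * γ) ^ (p ^ i + p ^ j)) -
      traceMap p k r (β * x ^ (p ^ i + p ^ j)) =
      traceMap p k r (β * (u * γ) ^ (p ^ i + p ^ j))

/-!
With `Q(x) = T(β x^{p^i + p^j})` and `u ∈ F_{p^k}`, Frobenius additivity gives
`Q(x + uγ) - Q(x) - Q(uγ) = u^{p^i} T(A x^{p^i})`, where `A = crossCoeff p k r i l β γ`: the
cross term `β γ^{p^i} x^{p^j}` is moved inside the trace by `y ↦ y^{p^{k(r-l)}}`, which fixes `T`.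
The trace is a nonzero polynomial map of degree `p^{k(r-1)} < |F|` and `x ↦ x^{p^i}` is onto,
so the derivative is constant iff `A = 0`. For `β ∈ F_{p^k}` we get
`A = β (γ^{p^{i+lk}} + γ^{p^{i+(r-l)k}})`, and a Frobenius power turns `A = 0` into
`γ^{p^{2kl}} = -γ`. After `r / gcd(r, 2l)` iterations the exponent is a power of `p^n`, so
`γ = (-1)^{r / gcd(r, 2l)} γ`, which forces evenness when `p` is odd.
-/

open Polynomial

theorem pow_pow_mul_eq_self {M : Type*} [Monoid M] {p k : ℕ} {c : M} (hc : c ^ p ^ k = c) :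
    ∀ t, c ^ p ^ (k * t) = c
  | 0 => by simp
  | t + 1 => by rw [Nat.mul_succ, pow_add, pow_mul, pow_pow_mul_eq_self hc t, hc]

theorem pow_eq_neg_self_iff {K : Type*} [Field K] {N : ℕ} {γ : K} (hN : 0 < N) (hγ : γ ≠ 0) :
    γ ^ N = -γ ↔ γ ^ (N - 1) = -1 := by
  rw [← Nat.sub_add_cancel hN, pow_succ, Nat.add_sub_cancel, neg_eq_neg_one_mul,
    mul_left_inj' hγ]

section TraceMap

variable {F : Type*} [Field F] {p k r : ℕ}

theorem traceMap_add [ExpChar F p] (a b : F) :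
    traceMap p k r (a + b) = traceMap p k r a + traceMap p k r b := by
  simp only [traceMap, ← Finset.sum_add_distrib, add_pow_expChar_pow]

theorem traceMap_zero [ExpChar F p] : traceMap p k r (0 : F) = 0 := by
  simp [traceMap, zero_pow (expChar_pow_pos F p _).ne']

theorem traceMap_mul_left {c : F} (hc : c ^ p ^ k = c) (a : F) :
    traceMap p k r (c * a) = c * traceMap p k r a := by
  simp only [traceMap, Finset.mul_sum, mul_pow, pow_pow_mul_eq_self hc]

theorem traceMap_pow_pow_self (hF : ∀ x : F, x ^ p ^ (k * r) = x) (y : F) :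
    traceMap p k r (y ^ p ^ k) = traceMap p k r y := by
  have hshift := Finset.sum_range_succ' (fun t => y ^ p ^ (k * t)) r
  rw [Finset.sum_range_succ, hF, mul_zero, pow_zero, pow_one, add_left_inj] at hshift
  simp only [traceMap]
  rw [hshift]
  refine Finset.sum_congr rfl fun t _ => ?_
  rw [← pow_mul, ← pow_add, mul_add_one, add_comm]

theorem traceMap_pow_pow_mul (hF : ∀ x : F, x ^ p ^ (k * r) = x) (m : ℕ) (y : F) :
    traceMap p k r (y ^ p ^ (k * m)) = traceMap p k r y := by
  induction m with
  | zero => simp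
  | succ m ih => rw [Nat.mul_succ, pow_add, pow_mul, traceMap_pow_pow_self hF, ih]

theorem exists_traceMap_ne_zero [Fintype F] (hp : 1 < p) (hk : 0 < k) (hr : 0 < r)
    (hcard : p ^ (k * (r - 1)) < Fintype.card F) : ∃ z : F, traceMap p k r z ≠ 0 := by
  set P : F[X] := ∑ t ∈ Finset.range r, X ^ p ^ (k * t)
  have hcoeff : P.coeff 1 = 1 := by
    rw [finsetSum_coeff, Finset.sum_eq_single_of_mem 0 (Finset.mem_range.2 hr)]
    · simp
    · intro t _ ht
      rw [coeff_X_pow, if_neg (Nat.one_lt_pow (by positivity) hp).ne]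
  have hdeg : P.natDegree ≤ p ^ (k * (r - 1)) := by
    refine natDegree_sum_le_of_forall_le _ _ fun t ht => ?_
    rw [natDegree_X_pow]
    have ht : t ≤ r - 1 := by have := Finset.mem_range.1 ht; omega
    exact Nat.pow_le_pow_right (by omega) (Nat.mul_le_mul_left k ht)
  obtain ⟨z, hz⟩ := P.exists_eval_ne_zero_of_natDegree_lt_card
    (fun h => by simp [h] at hcoeff) (by simpa using hdeg.trans_lt hcard)
  exact ⟨z, by simpa [P, traceMap, eval_finsetSum] using hz⟩

theorem eq_zero_of_forall_traceMap_mul_eq_zero (hT : ∃ z : F, traceMap p k r z ≠ 0) {a : F}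
    (h : ∀ z, traceMap p k r (a * z) = 0) : a = 0 := by
  by_contra ha
  obtain ⟨z, hz⟩ := hT
  exact hz (by simpa [ha] using h (a⁻¹ * z))

end TraceMap

def crossCoeff {F : Type*} [Field F] (p k r i l : ℕ) (β γ : F) : F :=
  β * γ ^ p ^ (i + l * k) + β ^ p ^ ((r - l) * k) * γ ^ p ^ (i + (r - l) * k)

section CrossCoeff

variable {F : Type*} [Field F] {p k r i l : ℕ} [ExpChar F p]

theorem traceMap_polarization (hF : ∀ x : F, x ^ p ^ (k * r) = x) (hl : l ≤ r)
    (β γ x : F) {u : F} (hu : u ^ p ^ k = u) :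
    traceMap p k r (β * (x + u * γ) ^ (p ^ i + p ^ (i + k * l))) =
      traceMap p k r (β * x ^ (p ^ i + p ^ (i + k * l))) +
      traceMap p k r (β * (u * γ) ^ (p ^ i + p ^ (i + k * l))) +
      u ^ p ^ i * traceMap p k r (crossCoeff p k r i l β γ * x ^ p ^ i) := by
  have hu' : u ^ p ^ (i + k * l) = u ^ p ^ i := by
    rw [add_comm, pow_add, pow_mul, pow_pow_mul_eq_self hu]
  have hui : (u ^ p ^ i) ^ p ^ k = u ^ p ^ i := by
    rw [← pow_mul, mul_comm, pow_mul, hu]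
  have hexpand : β * (x + u * γ) ^ (p ^ i + p ^ (i + k * l)) =
      β * x ^ (p ^ i + p ^ (i + k * l)) + β * (u * γ) ^ (p ^ i + p ^ (i + k * l)) +
      u ^ p ^ i * (β * γ ^ p ^ (i + k * l) * x ^ p ^ i) +
      u ^ p ^ i * (β * γ ^ p ^ i * x ^ p ^ (i + k * l)) := by
    rw [pow_add (x + u * γ), pow_add x, pow_add (u * γ), add_pow_expChar_pow,
      add_pow_expChar_pow, mul_pow, mul_pow, hu']
    ring
  -- `y ↦ y ^ p ^ (k * (r - l))` fixes the trace and sends `x ^ p ^ (i + k * l)` to `x ^ p ^ i`.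
  have hshift : traceMap p k r (β * γ ^ p ^ i * x ^ p ^ (i + k * l)) =
      traceMap p k r (β ^ p ^ ((r - l) * k) * γ ^ p ^ (i + (r - l) * k) * x ^ p ^ i) := by
    have hexp : i + k * l + (r - l) * k = i + k * r := by
      rw [Nat.sub_mul, mul_comm k l, mul_comm k r]
      have := Nat.mul_le_mul_right k hl
      omega
    rw [← traceMap_pow_pow_mul hF (r - l)]
    congr 1
    have hx : x ^ p ^ (i + k * r) = x ^ p ^ i := by rw [pow_add, pow_mul, hF]
    rw [mul_pow, mul_pow, ← pow_mul, ← pow_mul, ← pow_add, ← pow_add, mul_comm k (r - l), hexp,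
      hx]
  rw [hexpand, traceMap_add, traceMap_add, traceMap_add, traceMap_mul_left hui,
    traceMap_mul_left hui, hshift, crossCoeff, add_mul, traceMap_add, mul_comm l k]
  ring

theorem hasConstantDerivative_iff_crossCoeff_eq_zero [Finite F]
    (hF : ∀ x : F, x ^ p ^ (k * r) = x) (hl : l ≤ r) (hT : ∃ z : F, traceMap p k r z ≠ 0)
    (β γ : F) : HasConstantDerivative p k r i (i + k * l) β γ ↔ crossCoeff p k r i l β γ = 0 := by
  refine ⟨fun h => eq_zero_of_forall_traceMap_mul_eq_zero hT fun z => ?_, fun h x u hu => ?_⟩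
  · obtain ⟨x, rfl⟩ : ∃ x, x ^ p ^ i = z := (bijective_iterateFrobenius F p i).2 z
    have hx := h x 1 (one_pow _)
    rw [traceMap_polarization hF hl β γ x (one_pow _), one_pow, one_mul] at hx
    linear_combination hx
  · rw [traceMap_polarization hF hl β γ x hu, h, zero_mul, traceMap_zero, mul_zero, add_zero,
      add_sub_cancel_left]

theorem crossCoeff_eq_zero_iff_of_pow_pow_eq_self (hF : ∀ x : F, x ^ p ^ (k * r) = x)
    (hl : l ≤ r) {β : F} (hβ0 : β ≠ 0) (hβ : β ^ p ^ k = β) (γ : F) :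
    crossCoeff p k r i l β γ = 0 ↔ γ ^ p ^ (2 * k * l) = -γ := by
  have hexp : 2 * k * l + (i + (r - l) * k) = i + l * k + k * r := by
    rw [Nat.sub_mul, mul_comm k r]
    have := Nat.mul_le_mul_right k hl
    rw [show 2 * k * l = l * k + l * k by ring]
    omega
  have hfrob :
      iterateFrobenius F p (i + (r - l) * k) (γ ^ p ^ (2 * k * l)) = γ ^ p ^ (i + l * k) := by
    rw [iterateFrobenius_def, ← pow_mul, ← pow_add, hexp, pow_add p _ (k * r), pow_mul, hF]
  have hβ' : β ^ p ^ ((r - l) * k) = β := mul_comm k (r - l) ▸ pow_pow_mul_eq_self hβ (r - l)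
  rw [crossCoeff, hβ', ← mul_add, mul_eq_zero, or_iff_right hβ0, add_eq_zero_iff_eq_neg, ← hfrob]
  exact (iterateFrobenius F p _).injective.eq_iff' (by rw [map_neg, iterateFrobenius_def])

theorem pow_pow_mul_eq_neg_one_pow_mul {m : ℕ} {γ : F} (h : γ ^ p ^ m = -γ) (t : ℕ) :
    γ ^ p ^ (m * t) = (-1) ^ t * γ := by
  induction t with
  | zero => simp
  | succ t ih =>
    rw [Nat.mul_succ, pow_add, pow_mul, ih, mul_pow, ← pow_mul, mul_comm t, pow_mul,
      neg_one_pow_expChar_pow, h, pow_succ]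
    ring

theorem even_of_pow_pow_eq_neg (hchar : ringChar F ≠ 2) {m t : ℕ} {γ : F} (hγ : γ ≠ 0)
    (h : γ ^ p ^ m = -γ) (ht : γ ^ p ^ (m * t) = γ) : Even t := by
  rw [pow_pow_mul_eq_neg_one_pow_mul h, mul_eq_right₀ hγ] at ht
  exact (neg_one_pow_eq_one_iff_even (Ring.neg_one_ne_one_of_char_ne_two hchar)).1 ht

end CrossCoeff

theorem stmt_7_general {p k r n l i j : ℕ} (hp : p.Prime) (hk : 0 < k)
    (hn : n = r * k) (hlr : l < r) (hj : j = i + k * l)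
    {F : Type*} [Field F] [Fintype F] (hcard : Fintype.card F = p ^ n)
    (β γ : F) (hβ : β ≠ 0) (hγ : γ ≠ 0) :
    (HasConstantDerivative p k r i j β γ ↔
      β * γ ^ p ^ (i + l * k) +
        β ^ p ^ ((r - l) * k) * γ ^ p ^ (i + (r - l) * k) = 0) ∧
    (β ^ p ^ k = β →
      (HasConstantDerivative p k r i j β γ ↔
          γ ^ (p ^ (2 * k * l) - 1) = -1) ∧
        (2 < p → γ ^ (p ^ (2 * k * l) - 1) = -1 →
          Even (r / Nat.gcd r (2 * l)))) := by
  subst hj hn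
  have : Fact p.Prime := ⟨hp⟩
  have : CharP F p := charP_of_card_eq_prime_pow hcard
  have hF : ∀ x : F, x ^ p ^ (k * r) = x := fun x => by
    rw [mul_comm, ← hcard, FiniteField.pow_card]
  have hT : ∃ z : F, traceMap p k r z ≠ 0 := by
    refine exists_traceMap_ne_zero hp.one_lt hk (by omega) ?_
    rw [hcard, mul_comm r]
    exact Nat.pow_lt_pow_right hp.one_lt (Nat.mul_lt_mul_of_pos_left (by omega) hk)
  have hA := hasConstantDerivative_iff_crossCoeff_eq_zero (i := i) hF hlr.le hT β γ
  refine ⟨hA, fun hβk => ?_⟩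
  have hpos : 0 < p ^ (2 * k * l) := pow_pos hp.pos _
  have hneg := hA.trans (crossCoeff_eq_zero_iff_of_pow_pow_eq_self hF hlr.le hβ hβk γ)
  refine ⟨hneg.trans (pow_eq_neg_self_iff hpos hγ), fun hp2 hγq => ?_⟩
  have hperiod : 2 * k * l * (r / Nat.gcd r (2 * l)) = k * r * (2 * l / Nat.gcd r (2 * l)) := by
    rw [← Nat.mul_div_assoc _ (Nat.gcd_dvd_left r (2 * l)),
      ← Nat.mul_div_assoc _ (Nat.gcd_dvd_right r (2 * l))]
    congr 1
    ring
  refine even_of_pow_pow_eq_neg (by rw [ringChar.eq F p]; omega) hγ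
    ((pow_eq_neg_self_iff hpos hγ).2 hγq) ?_
  rw [hperiod]
  exact pow_pow_mul_eq_self (hF γ) _

/-- **Lemma 3.6.** Let `n = rk` with `r > 1`, `f(x) = T^n_k(β·x^{p^i+p^j})` with
`i < j` and `j = i + kl`, `0 < l < r`, and `β, γ ∈ F_{p^n}^*`.  Then
`f(x + uγ) − f(x) = T^n_k(β·(uγ)^{p^i+p^j})` for all `x, u` iff
`β·γ^{p^{i+lk}} + β^{p^{(r−l)k}}·γ^{p^{i+(r−l)k}} = 0`.  In particular, if
`β ∈ F_{p^k}^*` this holds iff `γ^{p^{2kl}−1} = −1`, which for `p > 2` requires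
`r / gcd(r, 2l)` to be even. -/
theorem stmt_7 {p k r n l i j : ℕ} (hp : p.Prime) (hk : 0 < k) (hr : 1 < r)
    (hn : n = r * k) (hl : 0 < l) (hlr : l < r) (hij : i < j) (hj : j = i + k * l)
    {F : Type*} [Field F] [Fintype F] (hcard : Fintype.card F = p ^ n)
    (β γ : F) (hβ : β ≠ 0) (hγ : γ ≠ 0) :
    (HasConstantDerivative p k r i j β γ ↔
      β * γ ^ p ^ (i + l * k) +
        β ^ p ^ ((r - l) * k) * γ ^ p ^ (i + (r - l) * k) = 0) ∧
    (β ^ p ^ k = β →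
      (HasConstantDerivative p k r i j β γ ↔
          γ ^ (p ^ (2 * k * l) - 1) = -1) ∧
        (2 < p → γ ^ (p ^ (2 * k * l) - 1) = -1 →
          Even (r / Nat.gcd r (2 * l)))) :=
  stmt_7_general hp hk hn hlr hj hcard β γ hβ hγ
end

section
/- Let p be a prime, n = rk with k > 1, f : F_{p^n} → F_{p^k}, h : F_{p^k} → F_{p^k}, and let γ ∈ F_{p^n}^* be a 0-linear translator of f. Define F(x) = x + γ·h(f(x)). Then the p-fold composition of F with itself is the identity on F_{p^n}; consequently F is a permutation of F_{p^n} with compositional inverse F^{−1}(x) = x + (p−1)·γ·h(f(x)), and F is an involution when p = 2. -/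
/-- **Proposition 4.3.** Let `n = rk` with `k > 1`, `f : F_{p^n} → F_{p^k}`,
`h : F_{p^k} → F_{p^k}`, and `γ ∈ F_{p^n}^*` a `0`-linear translator of `f`.
For `F(x) = x + γ·h(f(x))`, the `p`-fold composition of `F` with itself is the
identity; consequently `F` is a permutation of `F_{p^n}` with compositional inverse
`F^{−1}(x) = x + (p−1)·γ·h(f(x))`, and `F` is an involution when `p = 2`. -/
theorem stmt_11 {p k r n : ℕ} (hp : p.Prime) (hk : 1 < k) (hr : 0 < r) (hn : n = r * k)
    {F : Type*} [Field F] [Fintype F] (hcard : Fintype.card F = p ^ n)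
    (f h : F → F) (hf : ∀ x, f x ^ p ^ k = f x)
    (hh : ∀ u : F, u ^ p ^ k = u → h u ^ p ^ k = h u)
    (γ : F) (hγ : γ ≠ 0)
    (htr : IsLinearTranslator p k f γ 0) :
    (∀ x : F, (fun y : F => y + γ * h (f y))^[p] x = x) ∧
    Function.Bijective (fun y : F => y + γ * h (f y)) ∧
    Function.LeftInverse (fun x : F => x + ((p - 1 : ℕ) : F) * γ * h (f x))
      (fun y : F => y + γ * h (f y)) ∧
    Function.RightInverse (fun x : F => x + ((p - 1 : ℕ) : F) * γ * h (f x))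
      (fun y : F => y + γ * h (f y)) ∧
    (p = 2 → ∀ x : F,
      (fun y : F => y + γ * h (f y)) ((fun y : F => y + γ * h (f y)) x) = x) := by

  have hn0 : n ≠ 0 := by
    subst hn; positivity
  have hpF : (p : F) = 0 := by
    have h0 : ((p : F)) ^ n = 0 := by
      have hc := FiniteField.cast_card_eq_zero F
      rw [hcard] at hc; push_cast at hc; exact hc
    exact pow_eq_zero_iff hn0 |>.mp h0
  set Fn := fun y : F => y + γ * h (f y) with hFn
  have hsub : ∀ x u : F, u ^ p ^ k = u → f (x + u * γ) = f x := by
    intro x u hu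
    have := htr x u hu
    rw [mul_zero, sub_eq_zero] at this
    exact this
  have hfF : ∀ x, f (Fn x) = f x := by
    intro x
    have he : Fn x = x + h (f x) * γ := by simp only [hFn]; ring
    rw [he]
    exact hsub x _ (hh _ (hf x))
  have hiter : ∀ t x, Fn^[t] x = x + (t : F) * γ * h (f x) := by
    intro t
    induction t with
    | zero => intro x; simp
    | succ t ih =>
      intro x
      rw [Function.iterate_succ_apply, ih (Fn x), hfF x]
      simp only [hFn]
      push_cast
      ring
  have hid : ∀ x, Fn^[p] x = x := by
    intro x; rw [hiter, hpF]; ring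
  have hginv : ∀ x : F, x + ((p - 1 : ℕ) : F) * γ * h (f x) = Fn^[p - 1] x := by
    intro x; rw [hiter]
  have hp1 : p - 1 + 1 = p := Nat.succ_pred_eq_of_pos hp.pos
  have hleft : Function.LeftInverse (fun x : F => x + ((p - 1 : ℕ) : F) * γ * h (f x)) Fn := by
    intro x
    simp only [hginv]
    rw [← Function.iterate_succ_apply]
    simp only [Nat.succ_eq_add_one, hp1]
    exact hid x
  have hright : Function.RightInverse (fun x : F => x + ((p - 1 : ℕ) : F) * γ * h (f x)) Fn := by
    intro x
    simp only [hginv]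
    rw [← Function.iterate_succ_apply' Fn (p - 1) x]
    simp only [Nat.succ_eq_add_one, hp1]
    exact hid x
  refine ⟨hid, ⟨hleft.injective, hright.surjective⟩, hleft, hright, ?_⟩
  intro hp2 x
  have := hid x
  rw [hp2] at this
  simpa [Function.iterate_succ_apply, hFn] using this
end

section
/- Let p be an odd prime, n = rk with k > 1, f : F_{p^n} → F_{p^k}, and let γ ∈ F_{p^n}^* be a b-linear translator of f with b ≠ 0. Let λ ∈ F_{p^k}^* with λ ≠ −b^{−1}. Then F(x) = x + γ·λ·f(x) is a permutation of F_{p^n}. Moreover, if λ = −2·b^{−1}, then F is an involution. -/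
/-- **Proposition 4.7.** Let `p` be an odd prime, `n = rk` with `k > 1`,
`f : F_{p^n} → F_{p^k}`, and `γ ∈ F_{p^n}^*` a `b`-linear translator of `f` with
`b ≠ 0`.  Let `λ ∈ F_{p^k}^*` with `λ ≠ −b⁻¹`.  Then `F(x) = x + γ·λ·f(x)` is a
permutation of `F_{p^n}`; moreover, if `λ = −2·b⁻¹` then `F` is an involution. -/
theorem stmt_14 {p k r n : ℕ} (hp : p.Prime) (hp2 : p ≠ 2) (hk : 1 < k) (hr : 0 < r)
    (hn : n = r * k)
    {F : Type*} [Field F] [Fintype F] (hcard : Fintype.card F = p ^ n)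
    (f : F → F) (hf : ∀ x, f x ^ p ^ k = f x)
    (γ b : F) (hγ : γ ≠ 0) (hbsub : b ^ p ^ k = b) (hb : b ≠ 0)
    (htr : IsLinearTranslator p k f γ b)
    (lm : F) (hlmsub : lm ^ p ^ k = lm) (hlm0 : lm ≠ 0) (hlm : lm ≠ -b⁻¹) :
    Function.Bijective (fun x : F => x + γ * lm * f x) ∧
      (lm = -2 * b⁻¹ → ∀ x : F,
        (fun y : F => y + γ * lm * f y) ((fun y : F => y + γ * lm * f y) x) = x) := by
  -- characteristic of F is p
  obtain ⟨q, hq⟩ := CharP.exists F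
  haveI := hq
  have hqprime : q.Prime := CharP.char_is_prime F q
  obtain ⟨m, -, hcard'⟩ := FiniteField.card F q
  have hn0 : 0 < n := by
    subst hn; exact Nat.mul_pos hr (lt_trans Nat.zero_lt_one hk)
  have hpq : q = p := by
    have hdvd : q ∣ p ^ n := by
      rw [← hcard, hcard']
      exact dvd_pow_self q (by positivity)
    exact ((Nat.prime_dvd_prime_iff_eq hqprime hp).1 (hqprime.dvd_of_dvd_pow hdvd))
  subst hpq
  haveI : Fact q.Prime := ⟨hqprime⟩
  -- closure of the subfield under the relevant operations
  have hmul : ∀ a c : F, a ^ q ^ k = a → c ^ q ^ k = c → (a * c) ^ q ^ k = a * c := by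
    intro a c ha hc; rw [mul_pow, ha, hc]
  have hsub : ∀ a c : F, a ^ q ^ k = a → c ^ q ^ k = c → (a - c) ^ q ^ k = a - c := by
    intro a c ha hc; rw [sub_pow_char_pow, ha, hc]
  have h1b : (1 : F) + lm * b ≠ 0 := by
    intro h
    apply hlm
    have h' : lm * b = -1 := by linear_combination h
    calc lm = lm * b * b⁻¹ := by field_simp
      _ = -b⁻¹ := by rw [h']; ring
  -- injectivity
  have hinj : Function.Injective (fun x : F => x + γ * lm * f x) := by
    intro x y h
    simp only at h
    have hu : (lm * (f y - f x)) ^ q ^ k = lm * (f y - f x) :=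
      hmul _ _ hlmsub (hsub _ _ (hf y) (hf x))
    have hx : x = y + (lm * (f y - f x)) * γ := by ring_nf; linear_combination h
    have := htr y (lm * (f y - f x)) hu
    rw [← hx] at this
    have hd : (f x - f y) * (1 + lm * b) = 0 := by linear_combination this
    rcases mul_eq_zero.1 hd with hd | hd
    · have : f x = f y := by linear_combination hd
      linear_combination h - γ * lm * this
    · exact absurd hd h1b
  refine ⟨Finite.injective_iff_bijective.1 hinj, ?_⟩
  -- involution part
  intro hlm2 x
  simp only
  have hu : (lm * f x) ^ q ^ k = lm * f x := hmul _ _ hlmsub (hf x)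
  have hfx : f (x + γ * lm * f x) = f x + lm * f x * b := by
    have := htr x (lm * f x) hu
    have hxx : x + lm * f x * γ = x + γ * lm * f x := by ring
    rw [hxx] at this
    linear_combination this
  rw [hfx, hlm2]
  field_simp
  ring
end

section
/- Let m be a positive integer and ν ∈ F_{2^m} \ {0, 1}. Then for every b ∈ F_{2^m} \ {0, ν^{−1}}, the trinomial h(x) = x^{2^{2m}+1} + x^{2^m+1} + ν·x is complete over F_{2^{3m}} with respect to b; that is, both h and the map x ↦ x + b·h(x) are permutations of F_{2^{3m}}. (One may assume, as proved elsewhere, that h itself permutes F_{2^{3m}} for every ν ∈ F_{2^m} \ {0, 1}.) -/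
/-- **Theorem 5.3.** Let `ν ∈ F_{2^m} \ {0, 1}` and assume (as proved elsewhere) that
`h(x) = x^{2^{2m}+1} + x^{2^m+1} + ν·x` permutes `F_{2^{3m}}`.  Then for every
`b ∈ F_{2^m} \ {0, ν⁻¹}`, the trinomial `h` is complete over `F_{2^{3m}}` with
respect to `b`: both `h` and `x ↦ x + b·h(x)` are permutations of `F_{2^{3m}}`.
The subfield `F_{2^m}` is realized as `{x : F | x ^ 2 ^ m = x}`. -/
theorem stmt_15 {m n : ℕ} (hm : 0 < m) (hn : n = 3 * m)
    {F : Type*} [Field F] [Fintype F] (hcard : Fintype.card F = 2 ^ n)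
    (ν : F) (hνsub : ν ^ 2 ^ m = ν) (hν0 : ν ≠ 0) (hν1 : ν ≠ 1)
    (hperm : Function.Bijective
      (fun x : F => x ^ (2 ^ (2 * m) + 1) + x ^ (2 ^ m + 1) + ν * x))
    (b : F) (hbsub : b ^ 2 ^ m = b) (hb0 : b ≠ 0) (hbν : b ≠ ν⁻¹) :
    Function.Bijective
      (fun x : F => x ^ (2 ^ (2 * m) + 1) + x ^ (2 ^ m + 1) + ν * x) ∧
    Function.Bijective
      (fun x : F => x + b * (x ^ (2 ^ (2 * m) + 1) + x ^ (2 ^ m + 1) + ν * x)) := by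
  -- characteristic 2
  have hchar : CharP F 2 := by
    obtain ⟨p, hp⟩ := CharP.exists F
    obtain ⟨k, hk, hck⟩ := @FiniteField.card F _ _ p hp
    have hd2 : p ∣ 2 ^ n := by rw [← hcard, hck]; exact dvd_pow_self p k.pos.ne'
    have : p = 2 := (Nat.prime_dvd_prime_iff_eq hk Nat.prime_two).mp (hk.dvd_of_dvd_pow hd2)
    subst this; exact hp
  haveI := hchar
  have h2 : (2 : F) = 0 := by
    have := CharP.cast_eq_zero F 2
    exact_mod_cast this
  -- the m-fold Frobenius
  set φ : F →+* F := iterateFrobenius F 2 m with hφdef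
  have hφ : ∀ x : F, φ x = x ^ 2 ^ m := fun x => iterateFrobenius_def 2 m x
  have hφ3 : ∀ x : F, φ (φ (φ x)) = x := by
    intro x
    rw [hφ (φ (φ x)), hφ (φ x), hφ x, ← pow_mul, ← pow_mul, ← pow_add, ← pow_add,
      show m + (m + m) = n by omega, ← hcard]
    exact FiniteField.pow_card x
  have hφ2 : ∀ x : F, x ^ (2 ^ (2 * m)) = φ (φ x) := by
    intro x
    rw [hφ (φ x), hφ x, ← pow_mul, ← pow_add, show m + m = 2 * m by ring]
  have hφν : φ ν = ν := by rw [hφ]; exact hνsub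
  have hφb : φ b = b := by rw [hφ]; exact hbsub
  have hφbi : φ b⁻¹ = b⁻¹ := by rw [map_inv₀, hφb]
  -- the trace to the subfield
  set T : F → F := fun x => φ (φ x) + φ x + x with hT
  have hTfix : ∀ x : F, φ (T x) = T x := by
    intro x
    simp only [hT, map_add, hφ3]
    ring
  -- h written via φ
  have hval : ∀ x : F, x ^ (2 ^ (2 * m) + 1) + x ^ (2 ^ m + 1) + ν * x
      = φ (φ x) * x + φ x * x + ν * x := by
    intro x
    rw [pow_succ, pow_succ, hφ2 x, ← hφ x]
  -- T (h x) = ν * T x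
  have hTh : ∀ x : F, T (x ^ (2 ^ (2 * m) + 1) + x ^ (2 ^ m + 1) + ν * x) = ν * T x := by
    intro x
    rw [hval]
    simp only [hT, map_add, map_mul, hφ3, hφν]
    linear_combination (φ (φ x) * x + φ x * x + φ x * φ (φ x)) * h2
  -- T is additive and F_{2^m}-linear
  have hTadd : ∀ x y : F, T (x + y) = T x + T y := by
    intro x y; simp only [hT, map_add]; ring
  have hTsmul : ∀ c x : F, φ c = c → T (c * x) = c * T x := by
    intro c x hc; simp only [hT, map_mul, hc]; ring
  refine ⟨hperm, ?_⟩
  rw [Fintype.bijective_iff_injective_and_card]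
  refine ⟨?_, rfl⟩
  intro x y hE
  simp only [] at hE
  -- equal traces
  have h1ν : (1 : F) + b * ν ≠ 0 := by
    intro h0
    apply hbν
    have hb1 : ν * b = 1 := by linear_combination -h0 + (b * ν) * h2
    exact eq_inv_of_mul_eq_one_left (by linear_combination hb1)
  have hTE : T x + b * (ν * T x) = T y + b * (ν * T y) := by
    have := congrArg T hE
    rwa [hTadd, hTadd, hTsmul b _ hφb, hTsmul b _ hφb, hTh, hTh] at this
  have hTxy : T x = T y := by
    have h5 : (1 + b * ν) * (T x - T y) = 0 := by linear_combination hTE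
    exact sub_eq_zero.mp ((mul_eq_zero.mp h5).resolve_left h1ν)
  -- rewrite hE using the common trace value
  have hx' : x + b * (x ^ (2 ^ (2 * m) + 1) + x ^ (2 ^ m + 1) + ν * x)
      = x + b * (x * T x + x * x + ν * x) := by
    rw [hval]
    simp only [hT]
    linear_combination (-(b * x * x)) * h2
  have hy' : y + b * (y ^ (2 ^ (2 * m) + 1) + y ^ (2 ^ m + 1) + ν * y)
      = y + b * (y * T x + y * y + ν * y) := by
    rw [hval, hTxy]
    simp only [hT]
    linear_combination (-(b * y * y)) * h2
  rw [hx', hy'] at hE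
  -- key factorization
  have hbinv : b * b⁻¹ = 1 := mul_inv_cancel₀ hb0
  have key : b * ((x + y) * ((x + y) + (T x + ν + b⁻¹))) = 0 := by
    linear_combination hE + (x + y) * hbinv +
      (b * y * y + b * x * y + b * T x * y + b * ν * y + y) * h2
  have key2 : (x + y) * ((x + y) + (T x + ν + b⁻¹)) = 0 :=
    (mul_eq_zero.mp key).resolve_left hb0
  have hxy0 : x + y = 0 := by
    rcases mul_eq_zero.mp key2 with h | h
    · exact h
    · -- c := T x + ν + b⁻¹ lies in F_{2^m}, hence T c = c; but T (x+y) = 0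
      have hc : x + y = T x + ν + b⁻¹ := by
        linear_combination h - (T x + ν + b⁻¹) * h2
      have hTc : T (T x + ν + b⁻¹) = T x + ν + b⁻¹ := by
        simp only [hT, map_add, hφ3, hφν, hφbi]
        linear_combination (φ (φ x) + φ x + x + ν + b⁻¹) * h2
      have hTxy2 : T (x + y) = 0 := by
        rw [hTadd, hTxy]
        linear_combination (T y) * h2
      have hc0 : T x + ν + b⁻¹ = 0 := by rw [← hTc, ← hc, hTxy2]
      rw [hc, hc0]
  linear_combination hxy0 - y * h2
end

section
/- Let p be a prime, n = 2k, δ ∈ F_{p^k}, f(x) = x^{p^k} + x + δ, γ ∈ F_{p^n}^* with T^n_k(γ) = γ + γ^{p^k} = 0, and s any integer. Then F(x) = γ·(f(x))^s + x is a permutation of F_{p^n}, and more generally x ↦ L(γ)·(f(x))^s + L(x) is a permutation of F_{p^n} for any F_{p^k}-linear permutation L. Moreover F^{−1}(x) = x + (p−1)·γ·(f(x))^s, and F is an involution if and only if p = 2. -/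
/-!
Let `σ = x ↦ x ^ p ^ k`, an involutive automorphism of `F_{p^{2k}}` whose fixed field is
`F_{p^k}`. Then `f = σ + id + δ` takes values in the fixed field, and since `σ γ = -γ` the
perturbation `γ f(x)^s` is killed by `f`: `f (γ f(x)^s + x) = f x`. Hence the maps
`G_γ(x) = γ f(x)^s + x` compose additively in `γ`: `G_γ ∘ G_{-γ} = id`, and
`G_γ ∘ G_γ = G_{2γ}`, which is the identity exactly when `2 = 0` because `f 0 = δ` and
`f 1 = 2 + δ` cannot both vanish otherwise. An `F_{p^k}`-linear `L` commutes past the fixed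
factor `f(x)^s`, so `L ∘ G_γ` is the map `x ↦ L(γ) f(x)^s + L(x)`.
-/

section TraceShift

variable {R : Type*} [CommRing R] (σ : R →+* R) (δ γ : R) (s : ℕ)

def affineTrace (x : R) : R := σ x + x + δ

def traceShift (x : R) : R := γ * affineTrace σ δ x ^ s + x

variable {σ δ γ s}

theorem affineTrace_fixed (hσ : Function.Involutive σ) (hδ : σ δ = δ) (x : R) :
    σ (affineTrace σ δ x) = affineTrace σ δ x := by
  simp only [affineTrace, map_add, hσ x, hδ]
  ring

theorem affineTrace_traceShift (hσ : Function.Involutive σ) (hδ : σ δ = δ) (hγ : σ γ = -γ)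
    (x : R) : affineTrace σ δ (traceShift σ δ γ s x) = affineTrace σ δ x := by
  have hfix := affineTrace_fixed hσ hδ x
  simp only [traceShift, affineTrace, map_add, map_mul, map_pow, hγ] at hfix ⊢
  rw [hfix]
  ring

theorem traceShift_traceShift (hσ : Function.Involutive σ) (hδ : σ δ = δ) (hγ : σ γ = -γ)
    (γ' : R) (x : R) :
    traceShift σ δ γ' s (traceShift σ δ γ s x) = traceShift σ δ (γ' + γ) s x := by
  rw [traceShift, affineTrace_traceShift hσ hδ hγ x, traceShift, traceShift]
  ring

theorem leftInverse_traceShift_neg (hσ : Function.Involutive σ) (hδ : σ δ = δ)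
    (hγ : σ γ = -γ) :
    Function.LeftInverse (traceShift σ δ (-γ) s) (traceShift σ δ γ s) := by
  intro x
  rw [traceShift_traceShift hσ hδ hγ, neg_add_cancel]
  simp [traceShift]

theorem rightInverse_traceShift_neg (hσ : Function.Involutive σ) (hδ : σ δ = δ)
    (hγ : σ γ = -γ) :
    Function.RightInverse (traceShift σ δ (-γ) s) (traceShift σ δ γ s) := by
  have hγ' : σ (-γ) = -(-γ) := by rw [map_neg, hγ]
  have h := leftInverse_traceShift_neg (s := s) hσ hδ hγ'
  rwa [neg_neg] at h

theorem bijective_traceShift (hσ : Function.Involutive σ) (hδ : σ δ = δ) (hγ : σ γ = -γ) :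
    Function.Bijective (traceShift σ δ γ s) :=
  Function.bijective_iff_has_inverse.mpr
    ⟨_, leftInverse_traceShift_neg hσ hδ hγ, rightInverse_traceShift_neg hσ hδ hγ⟩

theorem semilinear_traceShift (hσ : Function.Involutive σ) (hδ : σ δ = δ) (l₀ l₁ x : R) :
    l₀ * traceShift σ δ γ s x + l₁ * σ (traceShift σ δ γ s x)
      = (l₀ * γ + l₁ * σ γ) * affineTrace σ δ x ^ s + (l₀ * x + l₁ * σ x) := by
  simp only [traceShift, map_add, map_mul, map_pow, affineTrace_fixed hσ hδ x]
  ring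

theorem traceShift_involutive_iff [IsDomain R] (hσ : Function.Involutive σ) (hδ : σ δ = δ)
    (hγ : σ γ = -γ) (hγ₀ : γ ≠ 0) :
    Function.Involutive (traceShift σ δ γ s) ↔ (2 : R) = 0 := by
  have hsq (x : R) :
      traceShift σ δ γ s (traceShift σ δ γ s x) = x + 2 * γ * affineTrace σ δ x ^ s := by
    rw [traceShift_traceShift hσ hδ hγ, traceShift]
    ring
  simp only [Function.Involutive, hsq, add_eq_left, mul_eq_zero, hγ₀, or_false, pow_eq_zero_iff']
  refine ⟨fun h => ?_, fun h x => .inl h⟩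
  by_contra h2
  have h0 := (h 0).resolve_left h2
  have h1 := (h 1).resolve_left h2
  simp only [affineTrace, map_zero, map_one] at h0 h1
  apply h2
  linear_combination h1.1 - h0.1

end TraceShift

theorem stmt_16_general {p k n : ℕ} (hp : p.Prime) (hn : n = 2 * k)
    {F : Type*} [Field F] [Fintype F] (hcard : Fintype.card F = p ^ n)
    (δ : F) (hδ : δ ^ p ^ k = δ) (γ : F) (hγ : γ ≠ 0) (hγT : γ + γ ^ p ^ k = 0)
    (s : ℕ) :
    Function.Bijective (fun x : F => γ * (x ^ p ^ k + x + δ) ^ s + x) ∧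
    (∀ (L : F → F) (l0 l1 : F), (∀ x, L x = l0 * x + l1 * x ^ p ^ k) →
      Function.Bijective L →
      Function.Bijective (fun x : F => L γ * (x ^ p ^ k + x + δ) ^ s + L x)) ∧
    Function.LeftInverse
      (fun x : F => x + ((p - 1 : ℕ) : F) * γ * (x ^ p ^ k + x + δ) ^ s)
      (fun x : F => γ * (x ^ p ^ k + x + δ) ^ s + x) ∧
    Function.RightInverse
      (fun x : F => x + ((p - 1 : ℕ) : F) * γ * (x ^ p ^ k + x + δ) ^ s)
      (fun x : F => γ * (x ^ p ^ k + x + δ) ^ s + x) ∧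
    ((∀ x : F, (fun y : F => γ * (y ^ p ^ k + y + δ) ^ s + y)
        ((fun y : F => γ * (y ^ p ^ k + y + δ) ^ s + y) x) = x) ↔ p = 2) := by
  have : Fact p.Prime := ⟨hp⟩
  have : CharP F p := charP_of_card_eq_prime_pow hcard
  set σ := iterateFrobenius F p k
  have hσ : Function.Involutive σ := fun x => by
    rw [iterateFrobenius_def, iterateFrobenius_def, ← pow_mul, ← pow_add, ← two_mul, ← hn,
      ← hcard, FiniteField.pow_card]
  have hσγ : σ γ = -γ := eq_neg_of_add_eq_zero_right hγT
  have hinv : (fun x : F => x + ((p - 1 : ℕ) : F) * γ * (x ^ p ^ k + x + δ) ^ s)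
      = traceShift σ δ (-γ) s := by
    funext x
    rw [Nat.cast_sub hp.one_le, CharP.cast_eq_zero, traceShift]
    simp only [affineTrace, σ, iterateFrobenius_def]
    ring
  change Function.Bijective (traceShift σ δ γ s) ∧ _
  rw [hinv]
  refine ⟨bijective_traceShift hσ hδ hσγ, fun L l₀ l₁ hL hLbij => ?_,
    leftInverse_traceShift_neg hσ hδ hσγ, rightInverse_traceShift_neg hσ hδ hσγ, ?_⟩
  · convert hLbij.comp (bijective_traceShift hσ hδ hσγ) using 1
    funext x
    simp only [Function.comp_apply, hL]
    exact (semilinear_traceShift hσ hδ l₀ l₁ x).symm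
  · refine (traceShift_involutive_iff hσ hδ hσγ hγ).trans ?_
    rw [← Nat.cast_ofNat, CharP.cast_eq_zero_iff F p, Nat.prime_dvd_prime_iff_eq hp Nat.prime_two]

/-- **Proposition 6.2 (the case `b = 0`).** Let `n = 2k`, `δ ∈ F_{p^k}`,
`f(x) = x^{p^k} + x + δ`, and `γ ∈ F_{p^n}^*` with `T^n_k(γ) = γ + γ^{p^k} = 0`.
Then for any integer `s`, `F(x) = γ·(f(x))^s + x` is a permutation of `F_{p^n}`,
and more generally `x ↦ L(γ)·(f(x))^s + L(x)` is a permutation for any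
`F_{p^k}`-linear permutation `L`.  Moreover `F^{−1}(x) = x + (p−1)·γ·(f(x))^s`,
and `F` is an involution iff `p = 2`. -/
theorem stmt_16 {p k n : ℕ} (hp : p.Prime) (hk : 0 < k) (hn : n = 2 * k)
    {F : Type*} [Field F] [Fintype F] (hcard : Fintype.card F = p ^ n)
    (δ : F) (hδ : δ ^ p ^ k = δ) (γ : F) (hγ : γ ≠ 0) (hγT : γ + γ ^ p ^ k = 0)
    (s : ℕ) :
    Function.Bijective (fun x : F => γ * (x ^ p ^ k + x + δ) ^ s + x) ∧
    (∀ (L : F → F) (l0 l1 : F), (∀ x, L x = l0 * x + l1 * x ^ p ^ k) →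
      Function.Bijective L →
      Function.Bijective (fun x : F => L γ * (x ^ p ^ k + x + δ) ^ s + L x)) ∧
    Function.LeftInverse
      (fun x : F => x + ((p - 1 : ℕ) : F) * γ * (x ^ p ^ k + x + δ) ^ s)
      (fun x : F => γ * (x ^ p ^ k + x + δ) ^ s + x) ∧
    Function.RightInverse
      (fun x : F => x + ((p - 1 : ℕ) : F) * γ * (x ^ p ^ k + x + δ) ^ s)
      (fun x : F => γ * (x ^ p ^ k + x + δ) ^ s + x) ∧
    ((∀ x : F, (fun y : F => γ * (y ^ p ^ k + y + δ) ^ s + y)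
        ((fun y : F => γ * (y ^ p ^ k + y + δ) ^ s + y) x) = x) ↔ p = 2) :=
  stmt_16_general hp hn hcard δ hδ γ hγ hγT s
end

section
/- Let n = 2k, δ ∈ F_{2^n}, s an integer in [0, 2^n − 2], and F : F_{2^n} → F_{2^n} given by F(x) = x + (x + x^{2^k} + δ)^s. Define g : F_{2^k} → F_{2^k} by g(y) = y + (y + δ)^s + (y + δ)^{2^k·s}. Then F is a permutation of F_{2^n} if and only if g is a bijection of F_{2^k}. In particular, if 2^k·s ≡ s (mod 2^n − 1), then F is a permutation of F_{2^n}. -/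
open Polynomial in
private lemma aux_T_surj {F : Type*} [Field F] [Fintype F] [CharP F 2] {k : ℕ} (hk : 0 < k)
    (hcard : Fintype.card F = 2 ^ (2 * k)) {c : F} (hc : c ^ 2 ^ k = c) :
    ∃ x : F, x + x ^ 2 ^ k = c := by
  classical
  have hq2 : 2 ≤ 2 ^ k := by
    calc 2 = 2 ^ 1 := (pow_one 2).symm
    _ ≤ 2 ^ k := Nat.pow_le_pow_right (by norm_num) hk
  have hFq : ∀ x : F, x ^ (2 ^ k * 2 ^ k) = x := by
    intro x
    have : (2 : ℕ) ^ k * 2 ^ k = 2 ^ (2 * k) := by rw [← pow_add]; ring_nf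
    rw [this, ← hcard, FiniteField.pow_card]
  have φadd : ∀ a b : F, (a + b) ^ 2 ^ k = a ^ 2 ^ k + b ^ 2 ^ k := fun a b =>
    add_pow_char_pow a b 2 k
  set K : Set F := {x : F | x ^ 2 ^ k = x} with hK
  -- the trace-like additive map
  set T : F →+ F := AddMonoidHom.mk' (fun x => x + x ^ 2 ^ k)
    (by
    intro a b
    show (a + b) + (a + b) ^ 2 ^ k = (a + a ^ 2 ^ k) + (b + b ^ 2 ^ k)
    rw [φadd]; ring) with hT
  have hker : (T.ker : Set F) = K := by
    ext x
    simp only [SetLike.mem_coe, AddMonoidHom.mem_ker, hT, AddMonoidHom.mk'_apply, hK,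
      Set.mem_setOf_eq]
    rw [CharTwo.add_eq_iff_eq_add, zero_add, eq_comm]
  have hrange : (T.range : Set F) ⊆ K := by
    rintro _ ⟨x, rfl⟩
    show (x + x ^ 2 ^ k) ^ 2 ^ k = x + x ^ 2 ^ k
    rw [φadd, ← pow_mul, hFq, add_comm]
  -- |K| ≤ 2^k via roots of X^(2^k) - X
  have hKfin : K.Finite := Set.toFinite _
  have hdeg : (X ^ 2 ^ k - X : F[X]).natDegree = 2 ^ k := by
    rw [natDegree_sub_eq_left_of_natDegree_lt]
    · simp [natDegree_X_pow]
    · simp [natDegree_X_pow]; omega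
  have hP0 : (X ^ 2 ^ k - X : F[X]) ≠ 0 := by
    intro h; rw [h] at hdeg; simp at hdeg; omega
  have hKcard : K.ncard ≤ 2 ^ k := by
    have hsub : K ⊆ ((X ^ 2 ^ k - X : F[X]).roots.toFinset : Set F) := by
      intro x hx
      simp only [Finset.coe_sort_coe, Multiset.mem_toFinset, Finset.mem_coe,
        mem_roots, hP0, ne_eq, not_false_iff, true_and, IsRoot.def, eval_sub,
        eval_pow, eval_X, sub_eq_zero]
      exact hx
    calc K.ncard ≤ ((X ^ 2 ^ k - X : F[X]).roots.toFinset : Set F).ncard :=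
          Set.ncard_le_ncard hsub (Set.toFinite _)
      _ = (X ^ 2 ^ k - X : F[X]).roots.toFinset.card := Set.ncard_coe_finset _
      _ ≤ Multiset.card (X ^ 2 ^ k - X : F[X]).roots := Multiset.toFinset_card_le _
      _ ≤ (X ^ 2 ^ k - X : F[X]).natDegree := (X ^ 2 ^ k - X : F[X]).card_roots'
      _ = 2 ^ k := hdeg
  -- cardinality bookkeeping
  have hcard1 : Nat.card F = Nat.card (F ⧸ T.ker) * Nat.card T.ker :=
    AddSubgroup.card_eq_card_quotient_mul_card_addSubgroup T.ker
  have hiso : Nat.card (F ⧸ T.ker) = Nat.card T.range :=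
    Nat.card_congr (QuotientAddGroup.quotientKerEquivRange T).toEquiv
  have hkerK : Nat.card T.ker = K.ncard := by
    rw [← Nat.card_coe_set_eq, ← hker]; rfl
  have hrangeN : Nat.card T.range = (T.range : Set F).ncard := by
    rw [← Nat.card_coe_set_eq]; rfl
  have hRle : (T.range : Set F).ncard ≤ K.ncard := Set.ncard_le_ncard hrange hKfin
  have hNF : Nat.card F = 2 ^ k * 2 ^ k := by
    rw [Nat.card_eq_fintype_card, hcard, ← pow_add]; ring_nf
  have heq : (T.range : Set F).ncard * K.ncard = 2 ^ k * 2 ^ k := by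
    rw [← hNF, hcard1, hiso, hkerK, hrangeN]
  have hKeq : K.ncard = 2 ^ k := by
    have h1 : 2 ^ k * 2 ^ k ≤ K.ncard * K.ncard := by
      calc 2 ^ k * 2 ^ k = (T.range : Set F).ncard * K.ncard := heq.symm
        _ ≤ K.ncard * K.ncard := Nat.mul_le_mul_right _ hRle
    have h2 : K.ncard * K.ncard ≤ 2 ^ k * 2 ^ k := Nat.mul_le_mul hKcard hKcard
    have h3 : K.ncard * K.ncard = 2 ^ k * 2 ^ k := le_antisymm h2 h1
    by_contra hne
    have hlt : K.ncard < 2 ^ k := lt_of_le_of_ne hKcard hne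
    have : K.ncard * K.ncard < 2 ^ k * 2 ^ k :=
      Nat.mul_lt_mul_of_lt_of_le hlt hKcard (by positivity)
    omega
  have hReq : (T.range : Set F).ncard = 2 ^ k := by
    rw [hKeq] at heq
    exact Nat.eq_of_mul_eq_mul_right (by positivity) heq
  have hsurj : (T.range : Set F) = K :=
    Set.eq_of_subset_of_ncard_le hrange (by rw [hKeq, hReq]) hKfin
  have hcK : c ∈ K := hc
  rw [← hsurj] at hcK
  obtain ⟨x, hx⟩ := hcK
  exact ⟨x, hx⟩

/-- **Proposition 6.4 (i).** Let `n = 2k`, `δ ∈ F_{2^n}`, `s ∈ [0, 2^n − 2]`, and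
`F(x) = x + (x + x^{2^k} + δ)^s` on `F_{2^n}`.  Define
`g(y) = y + (y + δ)^s + (y + δ)^{2^k·s}` on the subfield `F_{2^k}` (realized as
`{y : F | y ^ 2 ^ k = y}`).  Then `F` is a permutation of `F_{2^n}` iff `g` is a
bijection of `F_{2^k}`.  In particular, if `2^k·s ≡ s (mod 2^n − 1)` then `F` is a
permutation of `F_{2^n}`. -/
theorem stmt_17 {k n : ℕ} (hk : 0 < k) (hn : n = 2 * k)
    {F : Type*} [Field F] [Fintype F] (hcard : Fintype.card F = 2 ^ n)
    (δ : F) (s : ℕ) (hs : s ≤ 2 ^ n - 2) :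
    (Function.Bijective (fun x : F => x + (x + x ^ 2 ^ k + δ) ^ s) ↔
      Set.BijOn (fun y : F => y + (y + δ) ^ s + (y + δ) ^ (2 ^ k * s))
        {y : F | y ^ 2 ^ k = y} {y : F | y ^ 2 ^ k = y}) ∧
    (2 ^ k * s ≡ s [MOD 2 ^ n - 1] →
      Function.Bijective (fun x : F => x + (x + x ^ 2 ^ k + δ) ^ s)) := by
  subst hn
  -- characteristic 2
  have hp : CharP F (ringChar F) := ringChar.charP F
  obtain ⟨m, hpm, hcard'⟩ := FiniteField.card F (ringChar F)
  have hchar2 : ringChar F = 2 := by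
    have hdvd : ringChar F ∣ 2 ^ (2 * k) := by
      rw [← hcard, hcard']; exact dvd_pow_self _ (by positivity)
    have := hpm.dvd_of_dvd_pow (n := 2 * k) (m := 2) hdvd
    exact (Nat.prime_dvd_prime_iff_eq hpm Nat.prime_two).mp this
  haveI hch : CharP F 2 := by rw [← hchar2]; exact hp
  have hq2 : 2 ≤ 2 ^ k := by
    calc 2 = 2 ^ 1 := (pow_one 2).symm
    _ ≤ 2 ^ k := Nat.pow_le_pow_right (by norm_num) hk
  have hFq : ∀ x : F, x ^ (2 ^ k * 2 ^ k) = x := by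
    intro x
    have h2 : (2 : ℕ) ^ k * 2 ^ k = 2 ^ (2 * k) := by rw [← pow_add]; ring_nf
    rw [h2, ← hcard, FiniteField.pow_card]
  have φadd : ∀ a b : F, (a + b) ^ 2 ^ k = a ^ 2 ^ k + b ^ 2 ^ k := fun a b =>
    add_pow_char_pow a b 2 k
  set K : Set F := {y : F | y ^ 2 ^ k = y} with hKdef
  set Fn : F → F := fun x : F => x + (x + x ^ 2 ^ k + δ) ^ s with hFn
  set g : F → F := fun y : F => y + (y + δ) ^ s + (y + δ) ^ (2 ^ k * s) with hg
  have hTK : ∀ x : F, x + x ^ 2 ^ k ∈ K := by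
    intro x
    show (x + x ^ 2 ^ k) ^ 2 ^ k = x + x ^ 2 ^ k
    rw [φadd, ← pow_mul, hFq, add_comm]
  -- key compatibility: T (Fn x) = g (T x)
  have key : ∀ x : F, Fn x + (Fn x) ^ 2 ^ k = g (x + x ^ 2 ^ k) := by
    intro x
    have h1 : ((x + x ^ 2 ^ k + δ) ^ s) ^ 2 ^ k = (x + x ^ 2 ^ k + δ) ^ (2 ^ k * s) := by
      rw [← pow_mul, mul_comm]
    simp only [hFn, hg]
    rw [φadd, h1]
    ring
  have main : Function.Bijective Fn ↔ Set.BijOn g K K := by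
    constructor
    · intro hbij
      have hmaps : Set.MapsTo g K K := by
        intro y hy
        have hy' : y ^ 2 ^ k = y := hy
        show (g y) ^ 2 ^ k = g y
        have h1 : ((y + δ) ^ s) ^ 2 ^ k = (y + δ) ^ (2 ^ k * s) := by
          rw [← pow_mul, mul_comm]
        have h2 : ((y + δ) ^ (2 ^ k * s)) ^ 2 ^ k = (y + δ) ^ s := by
          rw [← pow_mul, show 2 ^ k * s * 2 ^ k = (2 ^ k * 2 ^ k) * s by ring,
            pow_mul, hFq]
        simp only [hg]
        rw [φadd, φadd, hy', h1, h2]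
        ring
      refine (Set.Finite.surjOn_iff_bijOn_of_mapsTo (Set.toFinite K) hmaps).mp ?_
      intro c hc
      obtain ⟨w, hw⟩ := aux_T_surj hk hcard (hc : c ^ 2 ^ k = c)
      obtain ⟨x, hx⟩ := hbij.surjective w
      refine ⟨x + x ^ 2 ^ k, hTK x, ?_⟩
      show g (x + x ^ 2 ^ k) = c
      rw [← key, hx, hw]
    · intro hbij
      rw [Finite.injective_iff_bijective.symm] at *
      intro x₁ x₂ he
      simp only [hFn] at he
      have h1 : g (x₁ + x₁ ^ 2 ^ k) = g (x₂ + x₂ ^ 2 ^ k) := by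
        rw [← key, ← key]
        simp only [hFn, he]
      have h2 : x₁ + x₁ ^ 2 ^ k = x₂ + x₂ ^ 2 ^ k :=
        hbij.injOn (hTK x₁) (hTK x₂) h1
      have h3 : (x₁ + x₁ ^ 2 ^ k + δ) ^ s = (x₂ + x₂ ^ 2 ^ k + δ) ^ s := by rw [h2]
      have := he
      rw [h3] at this
      exact add_right_cancel this
  refine ⟨main, fun hcong => main.mpr ?_⟩
  have hpow : ∀ t : F, t ^ (2 ^ k * s) = t ^ s := by
    intro t
    rcases eq_or_ne t 0 with rfl | ht
    · rcases Nat.eq_zero_or_pos s with rfl | hs'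
      · simp
      · rw [zero_pow (by positivity), zero_pow (by omega)]
    · have h1 : t ^ (2 ^ (2 * k) - 1) = 1 := by
        have := FiniteField.pow_card_sub_one_eq_one t ht
        rwa [hcard] at this
      have hcong' : (2 ^ k * s) % (2 ^ (2 * k) - 1) = s % (2 ^ (2 * k) - 1) := hcong
      rw [pow_eq_pow_mod _ h1, pow_eq_pow_mod s h1, hcong']
  have hgid : g = fun y : F => y := by
    funext y
    simp only [hg]
    rw [hpow, add_assoc, CharTwo.add_self_eq_zero, add_zero]
  rw [hgid]
  exact ⟨fun x h => h, fun x _ y _ h => h, fun x hx => ⟨x, hx, rfl⟩⟩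
end

section
/- Let p be an odd prime, n = 2k, δ ∈ F_{p^n}, s an integer in [1, p^n − 2], and L ∈ F_{p^k}[x] a linearized polynomial that permutes F_{p^n}. Define F(x) = L(x) + (x^{p^k} − x + δ)^s and G(y) = −L(y) + (y + δ)^s − (y + δ)^{p^k·s}, and let S = {y ∈ F_{p^n} : T^n_k(y) = 0} = {y ∈ F_{p^n} : y + y^{p^k} = 0}. Then G maps S to S, and F is a permutation of F_{p^n} if and only if G permutes S. In particular, if p^k·s ≡ s (mod p^n − 1), then F is a permutation of F_{p^n}. -/
/-- **Proposition 6.8 (i).** Let `p` be an odd prime, `n = 2k`, `δ ∈ F_{p^n}`,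
`s ∈ [1, p^n − 2]`, and `L ∈ F_{p^k}[x]` a linearized polynomial permuting `F_{p^n}`.
Let `F(x) = L(x) + (x^{p^k} − x + δ)^s`,
`G(y) = −L(y) + (y + δ)^s − (y + δ)^{p^k·s}`, and
`S = {y ∈ F_{p^n} : y + y^{p^k} = 0}`.  Then `G` maps `S` to `S`, and `F` is a
permutation of `F_{p^n}` iff `G` permutes `S`.  In particular, if
`p^k·s ≡ s (mod p^n − 1)` then `F` is a permutation of `F_{p^n}`. -/
theorem stmt_18 {p k n : ℕ} (hp : p.Prime) (hp2 : p ≠ 2) (hk : 0 < k) (hn : n = 2 * k)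
    {F : Type*} [Field F] [Fintype F] (hcard : Fintype.card F = p ^ n)
    (δ : F) (s : ℕ) (hs1 : 1 ≤ s) (hs2 : s ≤ p ^ n - 2)
    (L : F → F) (m : ℕ) (lam : Fin m → F)
    (hlamsub : ∀ t, lam t ^ p ^ k = lam t)
    (hL : ∀ x, L x = ∑ t : Fin m, lam t * x ^ p ^ (t : ℕ))
    (hLbij : Function.Bijective L) :
    Set.MapsTo (fun y : F => -L y + (y + δ) ^ s - (y + δ) ^ (p ^ k * s))
      {y : F | y + y ^ p ^ k = 0} {y : F | y + y ^ p ^ k = 0} ∧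
    (Function.Bijective (fun x : F => L x + (x ^ p ^ k - x + δ) ^ s) ↔
      Set.BijOn (fun y : F => -L y + (y + δ) ^ s - (y + δ) ^ (p ^ k * s))
        {y : F | y + y ^ p ^ k = 0} {y : F | y + y ^ p ^ k = 0}) ∧
    (p ^ k * s ≡ s [MOD p ^ n - 1] →
      Function.Bijective (fun x : F => L x + (x ^ p ^ k - x + δ) ^ s)) := by
  have hnpos : 0 < n := by omega
  haveI hFact : Fact p.Prime := ⟨hp⟩
  -- characteristic of F is p
  haveI hchar : CharP F p := by
    obtain ⟨q, hq⟩ := CharP.exists F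
    haveI := hq
    have hqp : q.Prime := CharP.char_is_prime F q
    obtain ⟨mm, -, hcard'⟩ := FiniteField.card F q
    have hpq : p = q := by
      have hdvd : p ∣ q ^ (mm : ℕ) := by
        rw [← hcard', hcard]; exact dvd_pow_self p (by omega)
      exact (Nat.prime_dvd_prime_iff_eq hp hqp).mp (hp.dvd_of_dvd_pow hdvd)
    subst hpq; exact hq
  have hQpos : 0 < p ^ k := pow_pos hp.pos k
  have hQQmul : p ^ k * p ^ k = p ^ n := by rw [hn, two_mul, pow_add]
  have hQQ : ∀ x : F, (x ^ p ^ k) ^ p ^ k = x := by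
    intro x
    rw [← pow_mul, hQQmul, ← hcard, FiniteField.pow_card]
  have hnegQ : ∀ x : F, (-x) ^ p ^ k = -(x ^ p ^ k) := by
    intro x
    have h := sub_pow_char_pow (R := F) (p := p) (n := k) (x := 0) (y := x)
    rw [zero_sub, zero_pow hQpos.ne', zero_sub] at h
    exact h
  have hLsub : ∀ a b : F, L (a - b) = L a - L b := by
    intro a b
    simp only [hL, ← Finset.sum_sub_distrib]
    refine Finset.sum_congr rfl fun t _ => ?_
    rw [sub_pow_char_pow, mul_sub]
  have hLQ : ∀ x : F, (L x) ^ p ^ k = L (x ^ p ^ k) := by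
    intro x
    rw [hL, hL, sum_pow_char_pow]
    refine Finset.sum_congr rfl fun t _ => ?_
    rw [mul_pow, hlamsub t, ← pow_mul, ← pow_mul, Nat.mul_comm]
  have hψmem : ∀ x : F, (x ^ p ^ k - x) + (x ^ p ^ k - x) ^ p ^ k = 0 := by
    intro x
    rw [sub_pow_char_pow, hQQ]
    ring
  have h2 : (2 : F) ≠ 0 := by
    have h2n : ((2 : ℕ) : F) ≠ 0 := by
      rw [Ne, CharP.cast_eq_zero_iff F p]
      intro h
      exact hp2 ((Nat.prime_dvd_prime_iff_eq hp Nat.prime_two).mp h)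
    simpa using h2n
  have h2Q : (2 : F) ^ p ^ k = 2 := by
    have h := add_pow_char_pow (R := F) (p := p) (n := k) (x := 1) (y := 1)
    simpa [one_add_one_eq_two] using h
  have hψsurj : ∀ y : F, y + y ^ p ^ k = 0 →
      (-(y / 2)) ^ p ^ k - (-(y / 2)) = y := by
    intro y hy
    have hyQ : y ^ p ^ k = -y := by linear_combination hy
    rw [hnegQ, div_pow, hyQ, h2Q]
    field_simp
    ring
  -- key identity: ψ(F(x)) = -G(ψ(x))
  have hkey : ∀ x : F,
      (L x + (x ^ p ^ k - x + δ) ^ s) ^ p ^ k - (L x + (x ^ p ^ k - x + δ) ^ s) =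
      -(-L (x ^ p ^ k - x) + ((x ^ p ^ k - x) + δ) ^ s
        - ((x ^ p ^ k - x) + δ) ^ (p ^ k * s)) := by
    intro x
    have h1 : (L x + (x ^ p ^ k - x + δ) ^ s) ^ p ^ k
        = L (x ^ p ^ k) + (x ^ p ^ k - x + δ) ^ (p ^ k * s) := by
      rw [add_pow_char_pow, hLQ, ← pow_mul, Nat.mul_comm s (p ^ k)]
    rw [h1, hLsub]
    ring
  -- MapsTo
  have hmaps : Set.MapsTo (fun y : F => -L y + (y + δ) ^ s - (y + δ) ^ (p ^ k * s))
      {y : F | y + y ^ p ^ k = 0} {y : F | y + y ^ p ^ k = 0} := by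
    intro y hy
    simp only [Set.mem_setOf_eq] at hy ⊢
    have hx0 : (-(y / 2)) ^ p ^ k - (-(y / 2)) = y := hψsurj y hy
    have hk2 := hkey (-(y / 2))
    rw [hx0] at hk2
    have hzmem := hψmem (L (-(y / 2)) + (y + δ) ^ s)
    have hG : -L y + (y + δ) ^ s - (y + δ) ^ (p ^ k * s)
        = -((L (-(y / 2)) + (y + δ) ^ s) ^ p ^ k - (L (-(y / 2)) + (y + δ) ^ s)) := by
      linear_combination hk2
    rw [hG, hnegQ]
    linear_combination -hzmem
  have hSfin : ({y : F | y + y ^ p ^ k = 0} : Set F).Finite := Set.toFinite _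
  -- the iff
  have hiff : (Function.Bijective (fun x : F => L x + (x ^ p ^ k - x + δ) ^ s) ↔
      Set.BijOn (fun y : F => -L y + (y + δ) ^ s - (y + δ) ^ (p ^ k * s))
        {y : F | y + y ^ p ^ k = 0} {y : F | y + y ^ p ^ k = 0}) := by
    constructor
    · intro hF
      rw [← Set.Finite.surjOn_iff_bijOn_of_mapsTo hSfin hmaps]
      intro z hz
      simp only [Set.mem_setOf_eq] at hz
      have hnz : (-z) + (-z) ^ p ^ k = 0 := by
        rw [hnegQ]; linear_combination -hz
      have hw : (-(-z / 2)) ^ p ^ k - (-(-z / 2)) = -z := hψsurj (-z) hnz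
      obtain ⟨x, hx⟩ := hF.2 (-(-z / 2))
      refine ⟨x ^ p ^ k - x, hψmem x, ?_⟩
      have hk2 := hkey x
      simp only at hx
      rw [hx, hw] at hk2
      simp only
      linear_combination hk2
    · intro hG
      rw [← Finite.injective_iff_bijective]
      intro x1 x2 hx
      simp only at hx
      have he : (fun y : F => -L y + (y + δ) ^ s - (y + δ) ^ (p ^ k * s)) (x1 ^ p ^ k - x1)
          = (fun y : F => -L y + (y + δ) ^ s - (y + δ) ^ (p ^ k * s)) (x2 ^ p ^ k - x2) := by
        simp only
        have k1 := hkey x1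
        have k2 := hkey x2
        rw [hx] at k1
        linear_combination k1 - k2
      have hψeq : x1 ^ p ^ k - x1 = x2 ^ p ^ k - x2 :=
        hG.injOn (hψmem x1) (hψmem x2) he
      have hLeq : L x1 = L x2 := by
        rw [hψeq] at hx
        linear_combination hx
      exact hLbij.1 hLeq
  refine ⟨hmaps, hiff, fun hmod => ?_⟩
  -- third part
  have hpow : ∀ u : F, u ^ (p ^ k * s) = u ^ s := by
    intro u
    rcases eq_or_ne u 0 with h | h
    · subst h
      rw [zero_pow (by positivity), zero_pow (by omega)]
    · have hle : s ≤ p ^ k * s := Nat.le_mul_of_pos_left s hQpos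
      have hdvd : (p ^ n - 1) ∣ (p ^ k * s - s) := (Nat.modEq_iff_dvd' hle).mp hmod.symm
      obtain ⟨c, hc⟩ := hdvd
      have hsplit : p ^ k * s = s + (p ^ n - 1) * c := by omega
      have hone : u ^ (p ^ n - 1) = 1 := by
        rw [← hcard]; exact FiniteField.pow_card_sub_one_eq_one u h
      rw [hsplit, pow_add, pow_mul, hone, one_pow, mul_one]
  apply hiff.mpr
  rw [← Set.Finite.injOn_iff_bijOn_of_mapsTo hSfin hmaps]
  intro a _ b _ hab
  simp only [hpow] at hab
  have hLab : L a = L b := by linear_combination -hab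
  exact hLbij.1 hLab
end
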